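/- arXiv:2604.09883 — 5 statements merged into one kernel-verified Lean document; each statement's English description precedes it below -/
import Mathlib

section
/- Let μ = Σ_{j=1}^m W_j δ_{x_j} be a finitely supported matrix probability measure that is n-definite. Then for each j = 0,…,n−1 there exists a unique monic orthogonal polynomial Π_j of degree j for μ, and moreover det γ_j ≠ 0 for every j = 0,…,n−2, where γ_j = ⟨Π_j, Π_j⟩_μ. -/
open Matrix Polynomial
open scoped ComplexOrder

noncomputable section

/-- The right quasi-inner product `⟨P,Q⟩_μ = Σ_j P(x_j)^* W_j Q(x_j)` of matrix
polynomials with respect to the finitely supported matrix measure `μ = Σ_j W_j δ_{x_j}`. -/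
def innerMu {k m : ℕ} (x : Fin m → ℝ) (W : Fin m → Matrix (Fin k) (Fin k) ℂ)
    (P Q : Polynomial (Matrix (Fin k) (Fin k) ℂ)) : Matrix (Fin k) (Fin k) ℂ :=
  ∑ j, (P.eval ((x j : ℂ) • (1 : Matrix (Fin k) (Fin k) ℂ)))ᴴ * W j *
      Q.eval ((x j : ℂ) • (1 : Matrix (Fin k) (Fin k) ℂ))

/-- `μ` is `n`-definite: `⟨P,P⟩_μ ≠ 0` for every nonzero matrix polynomial `P` of
degree at most `n - 2`. -/
def NDefinite {k m : ℕ} (n : ℕ) (x : Fin m → ℝ)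
    (W : Fin m → Matrix (Fin k) (Fin k) ℂ) : Prop :=
  ∀ P : Polynomial (Matrix (Fin k) (Fin k) ℂ), P ≠ 0 →
    (P.natDegree : ℤ) ≤ (n : ℤ) - 2 → innerMu x W P P ≠ 0

/-- `Pm` is a monic orthogonal polynomial of degree `j` for `μ`: it is monic of degree
`j` and `⟨Q, Pm⟩_μ = 0` for every matrix polynomial `Q` of degree less than `j`. -/
def IsMonicOrth {k m : ℕ} (x : Fin m → ℝ) (W : Fin m → Matrix (Fin k) (Fin k) ℂ)
    (j : ℕ) (Pm : Polynomial (Matrix (Fin k) (Fin k) ℂ)) : Prop :=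
  Pm.Monic ∧ Pm.natDegree = j ∧
    ∀ Q : Polynomial (Matrix (Fin k) (Fin k) ℂ), Q.natDegree < j → innerMu x W Q Pm = 0

abbrev MOP.MM (k : ℕ) := Matrix (Fin k) (Fin k) ℂ

namespace MOP

variable {k m : ℕ} (x : Fin m → ℝ) (W : Fin m → Matrix (Fin k) (Fin k) ℂ)

lemma evalc_mul (p q : Polynomial (MM k)) (z : ℂ) :
    (p * q).eval (z • (1 : MM k)) = p.eval (z • 1) * q.eval (z • 1) :=
  Polynomial.eval₂_mul_noncomm _ _ fun _ => (Commute.one_right _).smul_right z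

lemma innerMu_sub_right (P Q Q' : Polynomial (MM k)) :
    innerMu x W P (Q - Q') = innerMu x W P Q - innerMu x W P Q' := by
  simp [innerMu, mul_sub, Finset.sum_sub_distrib]

lemma innerMu_sum_right {ι : Type*} (s : Finset ι) (P : Polynomial (MM k))
    (Q : ι → Polynomial (MM k)) :
    innerMu x W P (∑ i ∈ s, Q i) = ∑ i ∈ s, innerMu x W P (Q i) := by
  simp [innerMu, Polynomial.eval_finset_sum, Finset.mul_sum]
  rw [Finset.sum_comm]

lemma innerMu_sum_left {ι : Type*} (s : Finset ι) (P : Polynomial (MM k))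
    (Q : ι → Polynomial (MM k)) :
    innerMu x W (∑ i ∈ s, Q i) P = ∑ i ∈ s, innerMu x W (Q i) P := by
  simp [innerMu, Polynomial.eval_finset_sum, Finset.sum_mul, conjTranspose_sum]
  rw [Finset.sum_comm]

lemma innerMu_mul_C_right (P Q : Polynomial (MM k)) (c : MM k) :
    innerMu x W P (Q * Polynomial.C c) = innerMu x W P Q * c := by
  unfold innerMu
  rw [Finset.sum_mul]
  refine Finset.sum_congr rfl fun j _ => ?_
  rw [evalc_mul, Polynomial.eval_C]
  simp only [Matrix.mul_assoc]

lemma innerMu_mul_C_left (P Q : Polynomial (MM k)) (c : MM k) :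
    innerMu x W (P * Polynomial.C c) Q = cᴴ * innerMu x W P Q := by
  unfold innerMu
  rw [Finset.mul_sum]
  refine Finset.sum_congr rfl fun j _ => ?_
  rw [evalc_mul, Polynomial.eval_C]
  simp only [conjTranspose_mul, Matrix.mul_assoc]

lemma innerMu_conj (hW : ∀ j, (W j).PosSemidef) (P Q : Polynomial (MM k)) :
    (innerMu x W P Q)ᴴ = innerMu x W Q P := by
  simp [innerMu, conjTranspose_sum, conjTranspose_mul, Matrix.mul_assoc,
    fun j => (hW j).1.eq]

lemma innerMu_posSemidef (hW : ∀ j, (W j).PosSemidef) (P : Polynomial (MM k)) :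
    (innerMu x W P P).PosSemidef := by
  unfold innerMu
  exact Finset.sum_induction _ _ (fun a b ha hb => ha.add hb) Matrix.PosSemidef.zero
    fun j _ => (hW j).conjTranspose_mul_mul_same _

lemma span_aux (F : ℕ → Polynomial (MM k)) :
    ∀ n : ℕ, (∀ i < n, (F i).Monic ∧ (F i).natDegree = i) →
      ∀ Q : Polynomial (MM k), Q.degree < (n : ℕ) →
      ∃ c : ℕ → MM k, Q = ∑ i ∈ Finset.range n, F i * Polynomial.C (c i) := by
  intro n
  induction n with
  | zero =>
    intro _ Q hQ
    have hQ0 : Q = 0 :=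
      Polynomial.degree_eq_bot.mp (Nat.WithBot.lt_zero_iff.mp (by simpa using hQ))
    exact ⟨0, by simp [hQ0]⟩
  | succ n ih =>
    intro hmon Q hQ
    obtain ⟨hFm, hFd⟩ := hmon n (Nat.lt_succ_self n)
    have hcoeff : ∀ b : ℕ, n ≤ b → (Q - F n * Polynomial.C (Q.coeff n)).coeff b = 0 := by
      intro b hb
      rcases eq_or_lt_of_le hb with h | h
      · subst h
        have h1 : (F n).coeff n = 1 := by
          have h2 := hFm.coeff_natDegree
          rwa [hFd] at h2
        simp [Polynomial.coeff_sub, Polynomial.coeff_mul_C, h1]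
      · have h1 : Q.coeff b = 0 :=
          Polynomial.coeff_eq_zero_of_degree_lt (lt_of_lt_of_le hQ (by exact_mod_cast h))
        have h2 : (F n).coeff b = 0 :=
          Polynomial.coeff_eq_zero_of_natDegree_lt (by omega)
        simp [Polynomial.coeff_sub, Polynomial.coeff_mul_C, h1, h2]
    have hdeg' : (Q - F n * Polynomial.C (Q.coeff n)).degree < (n : ℕ) :=
      (Polynomial.degree_lt_iff_coeff_zero _ _).mpr fun b hb => hcoeff b (by exact_mod_cast hb)
    obtain ⟨c, hc⟩ := ih (fun i hi => hmon i (by omega)) _ hdeg'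
    refine ⟨Function.update c n (Q.coeff n), ?_⟩
    rw [Finset.sum_range_succ, Function.update_self]
    rw [Finset.sum_congr rfl (fun i hi => by
      rw [Function.update_of_ne (Nat.ne_of_lt (Finset.mem_range.mp hi))]), ← hc]
    abel

lemma gamma_det_ne (hk : 1 ≤ k) (hW : ∀ j, (W j).PosSemidef) {n : ℕ}
    (hdef : NDefinite n x W) {j : ℕ} (hj : j + 2 ≤ n)
    {Pm : Polynomial (MM k)} (hPm : IsMonicOrth x W j Pm) :
    (innerMu x W Pm Pm).det ≠ 0 := by
  intro hdet
  obtain ⟨v, hv, hvv⟩ := Matrix.exists_mulVec_eq_zero_iff.mpr hdet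
  set V : MM k := Matrix.of (fun i _ => v i) with hV
  have hVne : V ≠ 0 := by
    obtain ⟨i, hi⟩ := Function.ne_iff.mp hv
    intro h
    exact hi (by simpa [hV] using congrFun (congrFun h i) ⟨0, hk⟩)
  have hco : (Pm * Polynomial.C V).coeff j = V := by
    rw [Polynomial.coeff_mul_C, ← hPm.2.1, hPm.1.coeff_natDegree, one_mul]
  have hPne : Pm * Polynomial.C V ≠ 0 := fun h =>
    hVne (by rw [← hco, h, Polynomial.coeff_zero])
  have hPdeg : ((Pm * Polynomial.C V).natDegree : ℤ) ≤ (n : ℤ) - 2 := by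
    have h1 : (Pm * Polynomial.C V).natDegree ≤ j := by
      have h2 := Polynomial.natDegree_mul_le (p := Pm) (q := Polynomial.C V)
      simpa [Polynomial.natDegree_C, hPm.2.1] using h2
    omega
  have hmv : innerMu x W Pm Pm * V = 0 := by
    ext i b
    have h3 := congrFun hvv i
    simpa [Matrix.mul_apply, Matrix.mulVec, dotProduct, hV] using h3
  have hzero : innerMu x W (Pm * Polynomial.C V) (Pm * Polynomial.C V) = 0 := by
    rw [innerMu_mul_C_left, innerMu_mul_C_right, hmv, Matrix.mul_zero]
  exact hdef _ hPne hPdeg hzero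

lemma exists_orth (hk : 1 ≤ k) (hW : ∀ j, (W j).PosSemidef) {n : ℕ}
    (hdef : NDefinite n x W) :
    ∀ j : ℕ, j + 1 ≤ n → ∃ F : ℕ → Polynomial (MM k), ∀ i ≤ j, IsMonicOrth x W i (F i) := by
  haveI : NeZero k := ⟨by omega⟩
  intro j
  induction j with
  | zero =>
    intro _
    refine ⟨fun _ => 1, fun i hi => ?_⟩
    have h0 : i = 0 := Nat.le_zero.mp hi
    subst h0
    exact ⟨Polynomial.monic_one, Polynomial.natDegree_one,
      fun Q hQ => absurd hQ (Nat.not_lt_zero _)⟩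
  | succ j ih =>
    intro hj
    obtain ⟨F, hF⟩ := ih (by omega)
    have hγ : ∀ i, i ≤ j → IsUnit (innerMu x W (F i) (F i)).det := fun i hi =>
      isUnit_iff_ne_zero.mpr (gamma_det_ne x W hk hW hdef (by omega) (hF i hi))
    set c : ℕ → MM k := fun i =>
      (innerMu x W (F i) (F i))⁻¹ * innerMu x W (F i) (X ^ (j + 1)) with hc
    set R : Polynomial (MM k) := ∑ i ∈ Finset.range (j + 1), F i * Polynomial.C (c i) with hR
    have hRdeg : R.degree < ((j + 1 : ℕ) : WithBot ℕ) := by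
      rw [hR]
      refine lt_of_le_of_lt (Polynomial.degree_sum_le _ _) ?_
      refine (Finset.sup_lt_iff (WithBot.bot_lt_coe _)).mpr fun i hi => ?_
      refine lt_of_le_of_lt Polynomial.degree_le_natDegree ?_
      have h1 : (F i * Polynomial.C (c i)).natDegree ≤ i := by
        have h2 := Polynomial.natDegree_mul_le (p := F i) (q := Polynomial.C (c i))
        simpa [Polynomial.natDegree_C,
          (hF i (by have := Finset.mem_range.mp hi; omega)).2.1] using h2
      exact_mod_cast lt_of_le_of_lt h1 (Finset.mem_range.mp hi)
    have hmonic : (X ^ (j + 1) - R).Monic := Polynomial.monic_X_pow_sub hRdeg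
    have hdeg : (X ^ (j + 1) - R).natDegree = j + 1 := by
      have hd : (X ^ (j + 1) - R).degree = ((j + 1 : ℕ) : WithBot ℕ) := by
        rw [Polynomial.degree_sub_eq_left_of_degree_lt, Polynomial.degree_X_pow]
        rw [Polynomial.degree_X_pow]; exact hRdeg
      exact Polynomial.natDegree_eq_of_degree_eq_some hd
    have horthF : ∀ i, i ≤ j → innerMu x W (F i) (X ^ (j + 1) - R) = 0 := by
      intro i hi
      rw [innerMu_sub_right, hR, innerMu_sum_right]
      have h0 : ∀ i' ∈ Finset.range (j + 1), i' ≠ i →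
          innerMu x W (F i) (F i' * Polynomial.C (c i')) = 0 := by
        intro i' hi' hne
        rw [innerMu_mul_C_right]
        have hz : innerMu x W (F i) (F i') = 0 := by
          rcases Nat.lt_or_ge i i' with h | h
          · exact (hF i' (by have := Finset.mem_range.mp hi'; omega)).2.2 (F i)
              (by rw [(hF i hi).2.1]; exact h)
          · have h' : i' < i := by omega
            rw [← innerMu_conj x W hW, (hF i hi).2.2 (F i')
              (by rw [(hF i' (by omega)).2.1]; exact h'), conjTranspose_zero]
        rw [hz, Matrix.zero_mul]
      rw [Finset.sum_eq_single i h0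
        (fun h => absurd (Finset.mem_range.mpr (by omega)) h)]
      rw [innerMu_mul_C_right]
      simp only [hc]
      rw [← Matrix.mul_assoc, Matrix.mul_nonsing_inv _ (hγ i hi), Matrix.one_mul, sub_self]
    have horth : ∀ Q : Polynomial (MM k), Q.natDegree < j + 1 →
        innerMu x W Q (X ^ (j + 1) - R) = 0 := by
      intro Q hQ
      by_cases hQ0 : Q = 0
      · simp [hQ0, innerMu]
      · have hdegQ : Q.degree < ((j + 1 : ℕ) : WithBot ℕ) := by
          rw [Polynomial.degree_eq_natDegree hQ0]; exact_mod_cast hQ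
        obtain ⟨cc, hcc⟩ := span_aux F (j + 1)
          (fun i hi => ⟨(hF i (by omega)).1, (hF i (by omega)).2.1⟩) Q hdegQ
        rw [hcc, innerMu_sum_left]
        refine Finset.sum_eq_zero fun i hi => ?_
        rw [innerMu_mul_C_left, horthF i (by have := Finset.mem_range.mp hi; omega),
          Matrix.mul_zero]
    refine ⟨Function.update F (j + 1) (X ^ (j + 1) - R), fun i hi => ?_⟩
    rcases Nat.lt_or_ge i (j + 1) with h | h
    · rw [Function.update_of_ne (by omega)]
      exact hF i (by omega)
    · have hij : i = j + 1 := by omega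
      subst hij
      rw [Function.update_self]
      exact ⟨hmonic, hdeg, horth⟩

end MOP

/-- If `μ` is `n`-definite, then for each `j = 0,…,n-1` there is a
unique monic orthogonal polynomial `Π_j` of degree `j` for `μ`, and
`det γ_j ≠ 0` for `j = 0,…,n-2`, where `γ_j = ⟨Π_j,Π_j⟩_μ`. -/
theorem monic_orthogonal_polynomials_exist_unique
    (k m n : ℕ) (hk : 1 ≤ k)
    (x : Fin m → ℝ) (hx : Function.Injective x)
    (W : Fin m → Matrix (Fin k) (Fin k) ℂ)
    (hW : ∀ j, (W j).PosSemidef) (hsum : ∑ j, W j = 1)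
    (hdef : NDefinite n x W) :
    (∀ j : ℕ, j + 1 ≤ n →
        ∃! Pm : Polynomial (Matrix (Fin k) (Fin k) ℂ), IsMonicOrth x W j Pm) ∧
    (∀ j : ℕ, j + 2 ≤ n →
        ∀ Pm : Polynomial (Matrix (Fin k) (Fin k) ℂ), IsMonicOrth x W j Pm →
          (innerMu x W Pm Pm).det ≠ 0) := by
  haveI : NeZero k := ⟨by omega⟩
  constructor
  · intro j hj
    obtain ⟨F, hF⟩ := MOP.exists_orth x W hk hW hdef j hj
    have hPm := hF j le_rfl
    refine ⟨F j, hPm, fun P' hP' => ?_⟩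
    by_contra hne
    have hD0 : P' - F j ≠ 0 := sub_ne_zero.mpr hne
    have hdd : (P' - F j).degree < (j : WithBot ℕ) := by
      have hd1 : P'.degree = (F j).degree := by
        rw [Polynomial.degree_eq_natDegree hP'.1.ne_zero,
          Polynomial.degree_eq_natDegree hPm.1.ne_zero, hP'.2.1, hPm.2.1]
      have hlc : P'.leadingCoeff = (F j).leadingCoeff := by
        rw [hP'.1.leadingCoeff, hPm.1.leadingCoeff]
      have h := Polynomial.degree_sub_lt hd1 hP'.1.ne_zero hlc
      rwa [Polynomial.degree_eq_natDegree hP'.1.ne_zero, hP'.2.1] at h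
    have hnd : (P' - F j).natDegree < j :=
      (Polynomial.natDegree_lt_iff_degree_lt hD0).mpr (by exact_mod_cast hdd)
    have h1 : innerMu x W (P' - F j) P' = 0 := hP'.2.2 _ hnd
    have h2 : innerMu x W (P' - F j) (F j) = 0 := hPm.2.2 _ hnd
    have hz : innerMu x W (P' - F j) (P' - F j) = 0 := by
      rw [MOP.innerMu_sub_right, h1, h2, sub_zero]
    exact hdef _ hD0 (by omega) hz
  · intro j hj Pm hPm
    exact MOP.gamma_det_ne x W hk hW hdef hj hPm

end
end

section
/- Let μ = Σ_{j=1}^m W_j δ_{x_j} be a finitely supported matrix probability measure that is n-definite, and suppose the monic orthogonal polynomial Π_{n−1} for μ satisfies rank ⟨Π_{n−1}, Π_{n−1}⟩_μ = k − ℓ with 0 ≤ ℓ < k. Let P_0,…,P_{n−2} be the unique normalized orthonormal polynomials for μ (with B_j = ⟨P_{j+1}, xP_j(x)⟩_μ upper triangular with positive diagonal for j ≤ n−3, and conventions P_{−1} ≡ 0, B_{−1} = I_k). Set A_{n−2} := ⟨P_{n−2}, x P_{n−2}(x)⟩_μ and P(x) := x P_{n−2}(x) − P_{n−2}(x) A_{n−2}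 − P_{n−3}(x) B_{n−3}^*. Then: (i) there is a unique B_{n−2} ∈ ℂ^{(k−ℓ)×k} in row echelon form with positive pivots such that ⟨P, P⟩_μ = B_{n−2}^* B_{n−2}; and (ii) the polynomial P_{n−1}(x) := P(x) B_{n−2}^* (B_{n−2} B_{n−2}^*)^{−1}, with coefficients in ℂ^{k×(k−ℓ)}, satisfies ⟨P_{n−1}, P_j⟩_μ = 0 for all j < n−1, ⟨P_{n−1}, P_{n−1}⟩_μ = I_{k−ℓ}, and ⟨P_{n−1}, x P_{n−2}(x)⟩_μ = B_{n−2}. -/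
/-!
`P = x P_{n-2} - P_{n-2} A_{n-2} - P_{n-3} B_{n-3}^*` is `x P_{n-2}` minus its orthogonal
projection onto `P_0, …, P_{n-2}`. These form a right basis of the matrix polynomials of degree
`≤ n-2`, because orthonormality forces their leading coefficients to be invertible. Hence `P` is
orthogonal to all polynomials of degree `< n-1`, and `P` times the inverse of its leading
coefficient is the monic orthogonal polynomial `Π_{n-1}`, so `⟨P,P⟩` is positive semidefinite of
rank `k-ℓ`.

Such a matrix has exactly one factorization `Bᴴ B` with `B` a `(k-ℓ) × k` row echelon matrix with
positive pivots: it is built column by column by Gram–Schmidt, and it is unique because the Gram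
matrix `Bᴴ B` determines the pivot of the first row (its first nonzero diagonal entry) and then
the first row itself. Finally `B Bᴴ` is invertible, and all relations for
`P_{n-1} = P Bᴴ (B Bᴴ)⁻¹` follow from `⟨P, x P_{n-2}⟩ = ⟨P, P⟩ = Bᴴ B`.
-/

open Matrix Polynomial
open scoped ComplexOrder

noncomputable section

/-- A square matrix is upper triangular with (real) positive diagonal entries. -/
def UpperTriPosDiag {k : ℕ} (M : Matrix (Fin k) (Fin k) ℂ) : Prop :=
  ∀ r c : Fin k, ((c : ℕ) < (r : ℕ) → M r c = 0) ∧ (r = c → 0 < (M r c).re ∧ (M r c).im = 0)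

/-- A matrix is in row echelon form with positive pivots. -/
def RowEchelonPosPivots {r m : ℕ} (R : Matrix (Fin r) (Fin m) ℂ) : Prop :=
  ∃ p : Fin r → Fin m, StrictMono p ∧
    ∀ i : Fin r, (0 < (R i (p i)).re ∧ (R i (p i)).im = 0) ∧
      ∀ j : Fin m, (j : ℕ) < (p i : ℕ) → R i j = 0

/-- The quasi-inner product `⟨F,G⟩_μ := Σ_j F(x_j)^* W_j G(x_j)` for (possibly
rectangular) matrix-valued functions on `ℝ`. -/
def innerFun {k m a b : ℕ} (x : Fin m → ℝ) (W : Fin m → Matrix (Fin k) (Fin k) ℂ)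
    (F : ℝ → Matrix (Fin k) (Fin a) ℂ) (G : ℝ → Matrix (Fin k) (Fin b) ℂ) :
    Matrix (Fin a) (Fin b) ℂ :=
  ∑ j, (F (x j))ᴴ * W j * G (x j)

/-- Evaluation of a matrix polynomial as a matrix-valued function on `ℝ`. -/
def pev {k : ℕ} (P : Polynomial (Matrix (Fin k) (Fin k) ℂ)) :
    ℝ → Matrix (Fin k) (Fin k) ℂ :=
  fun t => P.eval ((t : ℂ) • (1 : Matrix (Fin k) (Fin k) ℂ))


section InnerMu

variable {k m : ℕ} (x : Fin m → ℝ) (W : Fin m → Matrix (Fin k) (Fin k) ℂ)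

theorem innerFun_pev (P Q : Polynomial (Matrix (Fin k) (Fin k) ℂ)) :
    innerFun x W (pev P) (pev Q) = innerMu x W P Q := rfl

theorem eval_mul_C_smul_one (P : Polynomial (Matrix (Fin k) (Fin k) ℂ))
    (M : Matrix (Fin k) (Fin k) ℂ) (t : ℂ) : (P * C M).eval (t • 1) = P.eval (t • 1) * M :=
  eval_mul_C_of_commute ((Commute.one_right M).smul_right t)

theorem eval_X_mul_smul_one (P : Polynomial (Matrix (Fin k) (Fin k) ℂ)) (t : ℂ) :
    (X * P).eval (t • 1) = t • P.eval (t • 1) := by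
  rw [X_mul, eval_mul_X, Matrix.mul_smul, Matrix.mul_one]

theorem innerMu_mul_C_right (P Q : Polynomial (Matrix (Fin k) (Fin k) ℂ))
    (M : Matrix (Fin k) (Fin k) ℂ) : innerMu x W P (Q * C M) = innerMu x W P Q * M := by
  simp only [innerMu, eval_mul_C_smul_one, Finset.sum_mul, Matrix.mul_assoc]

theorem innerMu_mul_C_left (P Q : Polynomial (Matrix (Fin k) (Fin k) ℂ))
    (M : Matrix (Fin k) (Fin k) ℂ) : innerMu x W (P * C M) Q = Mᴴ * innerMu x W P Q := by
  simp only [innerMu, eval_mul_C_smul_one, conjTranspose_mul, Finset.mul_sum, Matrix.mul_assoc]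

theorem innerMu_add_right (P Q R : Polynomial (Matrix (Fin k) (Fin k) ℂ)) :
    innerMu x W P (Q + R) = innerMu x W P Q + innerMu x W P R := by
  simp only [innerMu, eval_add, Matrix.mul_add, Finset.sum_add_distrib]

theorem innerMu_sub_right (P Q R : Polynomial (Matrix (Fin k) (Fin k) ℂ)) :
    innerMu x W P (Q - R) = innerMu x W P Q - innerMu x W P R := by
  simp only [innerMu, eval_sub, Matrix.mul_sub, Finset.sum_sub_distrib]

theorem innerMu_zero_right (P : Polynomial (Matrix (Fin k) (Fin k) ℂ)) :
    innerMu x W P 0 = 0 := by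
  simp [innerMu]

theorem innerMu_sum_left {ι : Type*} (s : Finset ι)
    (P : ι → Polynomial (Matrix (Fin k) (Fin k) ℂ)) (Q : Polynomial (Matrix (Fin k) (Fin k) ℂ)) :
    innerMu x W (∑ i ∈ s, P i) Q = ∑ i ∈ s, innerMu x W (P i) Q := by
  simp only [innerMu, eval_finsetSum, conjTranspose_sum, Finset.sum_mul]
  exact Finset.sum_comm

theorem innerMu_X_mul_right (P Q : Polynomial (Matrix (Fin k) (Fin k) ℂ)) :
    innerMu x W P (X * Q) = innerMu x W (X * P) Q := by
  simp only [innerMu, eval_X_mul_smul_one, conjTranspose_smul, Complex.star_def,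
    Complex.conj_ofReal, Matrix.mul_smul, Matrix.smul_mul]

theorem conjTranspose_innerMu (hW : ∀ j, (W j).IsHermitian)
    (P Q : Polynomial (Matrix (Fin k) (Fin k) ℂ)) :
    (innerMu x W P Q)ᴴ = innerMu x W Q P := by
  simp only [innerMu, conjTranspose_sum, conjTranspose_mul, conjTranspose_conjTranspose,
    (hW _).eq, Matrix.mul_assoc]

theorem posSemidef_innerMu_self (hW : ∀ j, (W j).PosSemidef)
    (P : Polynomial (Matrix (Fin k) (Fin k) ℂ)) : (innerMu x W P P).PosSemidef :=
  posSemidef_sum _ fun j _ => (hW j).conjTranspose_mul_mul_same _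

theorem rank_innerMu_mul_C_self {Q : Polynomial (Matrix (Fin k) (Fin k) ℂ)}
    {u : Matrix (Fin k) (Fin k) ℂ} (hu : IsUnit u.det) :
    (innerMu x W (Q * C u) (Q * C u)).rank = (innerMu x W Q Q).rank := by
  rw [innerMu_mul_C_left, innerMu_mul_C_right,
    rank_mul_eq_right_of_isUnit_det _ _ (by rwa [det_conjTranspose, isUnit_star]),
    rank_mul_eq_left_of_isUnit_det _ _ hu]

theorem innerFun_mul_const_left {a b c : ℕ} (F : ℝ → Matrix (Fin k) (Fin a) ℂ)
    (K : Matrix (Fin a) (Fin c) ℂ) (G : ℝ → Matrix (Fin k) (Fin b) ℂ) :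
    innerFun x W (fun t => F t * K) G = Kᴴ * innerFun x W F G := by
  simp only [innerFun, conjTranspose_mul, Matrix.mul_assoc, Matrix.mul_sum]

theorem innerFun_mul_const_right {a b c : ℕ} (F : ℝ → Matrix (Fin k) (Fin a) ℂ)
    (G : ℝ → Matrix (Fin k) (Fin b) ℂ) (K : Matrix (Fin b) (Fin c) ℂ) :
    innerFun x W F (fun t => G t * K) = innerFun x W F G * K := by
  simp only [innerFun, Matrix.sum_mul, Matrix.mul_assoc]

end InnerMu

section PolynomialDegree

variable {R : Type*}

theorem Polynomial.degree_lt_of_natDegree_lt [Semiring R] {p : R[X]} {n : ℕ}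
    (h : p.natDegree < n) : p.degree < n :=
  degree_le_natDegree.trans_lt (WithBot.coe_lt_coe.mpr h)

theorem Polynomial.degree_X_mul_lt [Semiring R] {p : R[X]} {n : ℕ} (h : p.degree < n) :
    (X * p).degree < ↑(n + 1) := by
  refine (degree_lt_iff_coeff_zero _ _).mpr fun i hi => ?_
  obtain ⟨i, rfl⟩ := Nat.exists_eq_add_of_le' (Nat.one_le_of_lt hi)
  rw [coeff_X_mul]
  exact (degree_lt_iff_coeff_zero _ _).mp h i (by omega)

theorem Polynomial.natDegree_X_mul_sub_le [Ring R] {p q : R[X]} {d : ℕ} (hp : p.natDegree = d)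
    (hq : q.degree < ↑(d + 1)) : (X * p - q).natDegree ≤ d + 1 := by
  refine natDegree_le_iff_coeff_eq_zero.mpr fun i hi => ?_
  obtain ⟨i, rfl⟩ := Nat.exists_eq_add_of_le' (Nat.one_le_of_lt hi)
  rw [coeff_sub, coeff_X_mul, coeff_eq_zero_of_natDegree_lt (by omega),
    (degree_lt_iff_coeff_zero _ _).mp hq _ (by omega), sub_zero]

theorem Polynomial.coeff_X_mul_sub_succ [Ring R] {p q : R[X]} {d : ℕ} (hp : p.natDegree = d)
    (hq : q.degree < ↑(d + 1)) : (X * p - q).coeff (d + 1) = p.leadingCoeff := by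
  rw [coeff_sub, coeff_X_mul, (degree_lt_iff_coeff_zero _ _).mp hq _ le_rfl, sub_zero,
    leadingCoeff, hp]

theorem Polynomial.natDegree_mul_C_of_coeff_mul_eq_one [Semiring R] [Nontrivial R] {p : R[X]}
    {d : ℕ} {u : R} (hdeg : p.natDegree ≤ d) (hu : p.coeff d * u = 1) :
    (p * C u).natDegree = d :=
  natDegree_eq_of_le_of_coeff_ne_zero ((natDegree_mul_C_le _ _).trans hdeg)
    (by rw [coeff_mul_C, hu]; exact one_ne_zero)

theorem Polynomial.monic_mul_C_of_coeff_mul_eq_one [Semiring R] [Nontrivial R] {p : R[X]}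
    {d : ℕ} {u : R} (hdeg : p.natDegree ≤ d) (hu : p.coeff d * u = 1) : (p * C u).Monic := by
  rw [Monic, leadingCoeff, natDegree_mul_C_of_coeff_mul_eq_one hdeg hu, coeff_mul_C, hu]

end PolynomialDegree

section RightSpan

def SpansDegreeLT {k : ℕ} (P : ℕ → Polynomial (Matrix (Fin k) (Fin k) ℂ)) (d : ℕ) : Prop :=
  ∀ Q : Polynomial (Matrix (Fin k) (Fin k) ℂ), Q.degree < d →
    ∃ c : ℕ → Matrix (Fin k) (Fin k) ℂ, Q = ∑ j ∈ Finset.range d, P j * C (c j)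

variable {k m : ℕ} (x : Fin m → ℝ) (W : Fin m → Matrix (Fin k) (Fin k) ℂ)
  {P : ℕ → Polynomial (Matrix (Fin k) (Fin k) ℂ)} {d : ℕ}

theorem spansDegreeLT_zero (P : ℕ → Polynomial (Matrix (Fin k) (Fin k) ℂ)) :
    SpansDegreeLT P 0 := fun Q hQ =>
  ⟨0, by simpa using hQ⟩

theorem SpansDegreeLT.succ (hspan : SpansDegreeLT P d) (hdeg : (P d).natDegree = d)
    (hunit : IsUnit (P d).leadingCoeff) : SpansDegreeLT P (d + 1) := by
  intro Q hQ
  set N := (P d).leadingCoeff⁻¹ * Q.coeff d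
  have hlc : (P d).coeff d * N = Q.coeff d := by
    rw [show (P d).coeff d = (P d).leadingCoeff by rw [leadingCoeff, hdeg], ← Matrix.mul_assoc,
      mul_nonsing_inv _ ((isUnit_iff_isUnit_det _).mp hunit), Matrix.one_mul]
  obtain ⟨c, hc⟩ := hspan (Q - P d * C N) <| by
    refine (degree_lt_iff_coeff_zero _ _).mpr fun i hi => ?_
    rw [coeff_sub, coeff_mul_C]
    rcases hi.eq_or_lt with rfl | hi
    · rw [hlc, sub_self]
    · rw [coeff_eq_zero_of_degree_lt (hQ.trans_le (by exact_mod_cast hi)),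
        coeff_eq_zero_of_natDegree_lt (hdeg.trans_lt hi), zero_mul, sub_zero]
  refine ⟨Function.update c d N, ?_⟩
  rw [Finset.sum_range_succ, Function.update_self, Finset.sum_congr rfl fun j hj => by
    rw [Function.update_of_ne (Finset.mem_range.mp hj).ne], ← hc, sub_add_cancel]

theorem SpansDegreeLT.innerMu_eq_zero (hspan : SpansDegreeLT P d)
    {R : Polynomial (Matrix (Fin k) (Fin k) ℂ)} (hR : ∀ j < d, innerMu x W (P j) R = 0)
    {Q : Polynomial (Matrix (Fin k) (Fin k) ℂ)} (hQ : Q.degree < d) : innerMu x W Q R = 0 := by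
  obtain ⟨c, rfl⟩ := hspan Q hQ
  rw [innerMu_sum_left]
  exact Finset.sum_eq_zero fun j hj => by
    rw [innerMu_mul_C_left, hR j (Finset.mem_range.mp hj), Matrix.mul_zero]

/-- If `L * M = 0` for the leading coefficient `L`, then `P d * C M` has degree `< d`, hence is
orthogonal to `P d`, which forces `Mᴴ * M = ⟨P d * C M, P d * C M⟩ = 0`. -/
theorem SpansDegreeLT.isUnit_leadingCoeff (hspan : SpansDegreeLT P d)
    (hdeg : (P d).natDegree = d) (horth : ∀ j < d, innerMu x W (P j) (P d) = 0)
    (hnorm : innerMu x W (P d) (P d) = 1) : IsUnit (P d).leadingCoeff := by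
  refine mulVec_injective_iff_isUnit.mp <| isLeftRegular_iff_mulVec_injective.mp <|
    isLeftRegular_iff_right_eq_zero_of_mul.mpr fun M hM => ?_
  have hdegQ : (P d * C M).degree < d := by
    refine (degree_lt_iff_coeff_zero _ _).mpr fun i hi => ?_
    rw [coeff_mul_C]
    rcases hi.eq_or_lt with rfl | hi
    · rwa [leadingCoeff, hdeg] at hM
    · rw [coeff_eq_zero_of_natDegree_lt (hdeg.trans_lt hi), zero_mul]
  rw [← conjTranspose_mul_self_eq_zero]
  calc Mᴴ * M = innerMu x W (P d * C M) (P d * C M) := by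
        rw [innerMu_mul_C_left, innerMu_mul_C_right, hnorm, Matrix.one_mul]
    _ = 0 := by rw [innerMu_mul_C_right, hspan.innerMu_eq_zero x W horth hdegQ, Matrix.zero_mul]

theorem spansDegreeLT_of_orthonormal (hdeg : ∀ j < d, (P j).natDegree = j)
    (horth : ∀ i j, i < d → j < d → innerMu x W (P i) (P j) = if i = j then 1 else 0) :
    SpansDegreeLT P d := by
  induction d with
  | zero => exact spansDegreeLT_zero P
  | succ d ih =>
    have hspan := ih (fun j hj => hdeg j (by omega))
      (fun i j hi hj => horth i j (by omega) (by omega))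
    refine hspan.succ (hdeg d d.lt_succ_self) <|
      hspan.isUnit_leadingCoeff x W (hdeg d d.lt_succ_self) (fun j hj => ?_) ?_
    · rw [horth j d (by omega) (by omega), if_neg hj.ne]
    · rw [horth d d (by omega) (by omega), if_pos rfl]

end RightSpan

section Recurrence

variable {k m : ℕ} (x : Fin m → ℝ) (W : Fin m → Matrix (Fin k) (Fin k) ℂ)
  (P : ℕ → Polynomial (Matrix (Fin k) (Fin k) ℂ)) (d : ℕ)

/-- The paper's `P(x) = x P_d(x) - P_d(x) A_d - P_{d-1}(x) B_{d-1}^*`, the last term being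
absent for `d = 0`. -/
def recurrencePoly : Polynomial (Matrix (Fin k) (Fin k) ℂ) :=
  X * P d - (P d * C (innerMu x W (P d) (X * P d)) +
    if d = 0 then 0 else P (d - 1) * C (innerMu x W (P d) (X * P (d - 1)))ᴴ)

variable {x W P d} (hdeg : ∀ j ≤ d, (P j).natDegree = j)
  (horth : ∀ i j, i ≤ d → j ≤ d → innerMu x W (P i) (P j) = if i = j then 1 else 0)
include hdeg

theorem degree_X_mul_sub_recurrencePoly_lt :
    (X * P d - recurrencePoly x W P d).degree < ↑(d + 1) := by
  rw [recurrencePoly, sub_sub_cancel]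
  refine degree_lt_of_natDegree_lt ((natDegree_add_le _ _).trans_lt (max_lt ?_ ?_))
  · exact (natDegree_mul_C_le _ _).trans_lt (by rw [hdeg d le_rfl]; omega)
  · split_ifs
    · simp
    · exact (natDegree_mul_C_le _ _).trans_lt (by rw [hdeg (d - 1) (by omega)]; omega)

theorem natDegree_recurrencePoly_le : (recurrencePoly x W P d).natDegree ≤ d + 1 := by
  simpa only [sub_sub_cancel] using
    natDegree_X_mul_sub_le (hdeg d le_rfl) (degree_X_mul_sub_recurrencePoly_lt hdeg)

theorem coeff_recurrencePoly_succ :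
    (recurrencePoly x W P d).coeff (d + 1) = (P d).leadingCoeff := by
  simpa only [sub_sub_cancel] using
    coeff_X_mul_sub_succ (hdeg d le_rfl) (degree_X_mul_sub_recurrencePoly_lt hdeg)

include horth

theorem spansDegreeLT_self_of_orthonormal : SpansDegreeLT P d :=
  spansDegreeLT_of_orthonormal x W (fun j hj => hdeg j hj.le)
    (fun i j hi hj => horth i j hi.le hj.le)

theorem spansDegreeLT_succ_of_orthonormal : SpansDegreeLT P (d + 1) :=
  spansDegreeLT_of_orthonormal x W (fun j hj => hdeg j (by omega))
    (fun i j hi hj => horth i j (by omega) (by omega))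

theorem isUnit_leadingCoeff_of_orthonormal : IsUnit (P d).leadingCoeff :=
  (spansDegreeLT_self_of_orthonormal hdeg horth).isUnit_leadingCoeff x W (hdeg d le_rfl)
    (fun j hj => by rw [horth j d hj.le le_rfl, if_neg hj.ne])
    (by rw [horth d d le_rfl le_rfl, if_pos rfl])

theorem innerMu_P_recurrencePoly_eq_zero (hW : ∀ j, (W j).IsHermitian) {j : ℕ} (hj : j ≤ d) :
    innerMu x W (P j) (recurrencePoly x W P d) = 0 := by
  have hcorr : innerMu x W (P j)
      (if d = 0 then 0 else P (d - 1) * C (innerMu x W (P d) (X * P (d - 1)))ᴴ) =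
      if j + 1 = d then (innerMu x W (P d) (X * P (d - 1)))ᴴ else 0 := by
    split_ifs with h0 h1 h1
    · omega
    · exact innerMu_zero_right x W _
    · rw [innerMu_mul_C_right, horth j (d - 1) hj (by omega), if_pos (by omega), Matrix.one_mul]
    · rw [innerMu_mul_C_right, horth j (d - 1) hj (by omega), if_neg (by omega), Matrix.zero_mul]
  rw [recurrencePoly, innerMu_sub_right, innerMu_add_right, innerMu_mul_C_right,
    horth j d hj le_rfl, hcorr, innerMu_X_mul_right]
  obtain rfl | rfl | hlt : j = d ∨ j + 1 = d ∨ j + 1 < d := by omega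
  · rw [← innerMu_X_mul_right, if_pos rfl, if_neg (by omega), Matrix.one_mul, add_zero, sub_self]
  · rw [← conjTranspose_innerMu x W hW, Nat.add_sub_cancel, if_neg (by omega), if_pos rfl,
      Matrix.zero_mul, zero_add, sub_self]
  · -- `x P_j` has degree `j + 1 < d`, so it is orthogonal to `P_d`.
    have hX : (X * P j).degree < ↑d :=
      (degree_X_mul_lt (n := j + 1) (degree_lt_of_natDegree_lt (by rw [hdeg j hj]; omega))).trans_le
        (WithBot.coe_le_coe.mpr hlt)
    rw [(spansDegreeLT_self_of_orthonormal hdeg horth).innerMu_eq_zero x W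
        (fun i hi => by rw [horth i d hi.le le_rfl, if_neg hi.ne]) hX,
      if_neg (by omega), if_neg (by omega), Matrix.zero_mul, add_zero, sub_zero]

theorem innerMu_recurrencePoly_eq_zero (hW : ∀ j, (W j).IsHermitian)
    {Q : Polynomial (Matrix (Fin k) (Fin k) ℂ)} (hQ : Q.degree < ↑(d + 1)) :
    innerMu x W Q (recurrencePoly x W P d) = 0 :=
  (spansDegreeLT_succ_of_orthonormal hdeg horth).innerMu_eq_zero x W
    (fun _ hj => innerMu_P_recurrencePoly_eq_zero hdeg horth hW (Nat.lt_succ_iff.mp hj)) hQ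

theorem innerMu_recurrencePoly_X_mul (hW : ∀ j, (W j).IsHermitian) :
    innerMu x W (recurrencePoly x W P d) (X * P d) =
      innerMu x W (recurrencePoly x W P d) (recurrencePoly x W P d) := by
  rw [← add_sub_cancel (recurrencePoly x W P d) (X * P d), innerMu_add_right,
    ← conjTranspose_innerMu x W hW (X * P d - _),
    innerMu_recurrencePoly_eq_zero hdeg horth hW (degree_X_mul_sub_recurrencePoly_lt hdeg),
    conjTranspose_zero, add_zero]

theorem isMonicOrth_recurrencePoly_mul_C_inv [Nonempty (Fin k)] (hW : ∀ j, (W j).IsHermitian) :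
    IsMonicOrth x W (d + 1) (recurrencePoly x W P d * C (P d).leadingCoeff⁻¹) := by
  have hu : (recurrencePoly x W P d).coeff (d + 1) * (P d).leadingCoeff⁻¹ = 1 := by
    rw [coeff_recurrencePoly_succ hdeg, mul_nonsing_inv _ ((isUnit_iff_isUnit_det _).mp
      (isUnit_leadingCoeff_of_orthonormal hdeg horth))]
  refine ⟨monic_mul_C_of_coeff_mul_eq_one (natDegree_recurrencePoly_le hdeg) hu,
    natDegree_mul_C_of_coeff_mul_eq_one (natDegree_recurrencePoly_le hdeg) hu, fun Q hQ => ?_⟩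
  rw [innerMu_mul_C_right, innerMu_recurrencePoly_eq_zero hdeg horth hW
    (degree_lt_of_natDegree_lt hQ), Matrix.zero_mul]

end Recurrence

theorem Complex.eq_of_pos_of_star_mul_self_eq {a b : ℂ} (ha : 0 < a) (hb : 0 < b)
    (h : star a * a = star b * b) : a = b := by
  rw [(IsSelfAdjoint.of_nonneg ha.le).star_eq, (IsSelfAdjoint.of_nonneg hb.le).star_eq,
    mul_self_eq_mul_self_iff] at h
  exact h.resolve_right fun h' => lt_asymm ha (h' ▸ neg_neg_of_pos hb)

theorem Matrix.isUnit_of_rank_eq_card {n K : Type*} [Fintype n] [DecidableEq n] [Field K]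
    {A : Matrix n n K} (h : A.rank = Fintype.card n) : IsUnit A := by
  rw [← Matrix.mulVec_injective_iff_isUnit, ← Matrix.coe_mulVecLin,
    LinearMap.injective_iff_surjective, ← LinearMap.range_eq_top]
  exact Submodule.eq_top_of_finrank_eq (h.trans (Module.finrank_fintype_fun_eq_card K).symm)

theorem Matrix.conjTranspose_mul_self_eq_vecMulVec_add {r : ℕ} {n α : Type*} [Semiring α]
    [StarRing α] (B : Matrix (Fin (r + 1)) n α) :
    Bᴴ * B = vecMulVec (star (B 0)) (B 0) +
      (B.submatrix Fin.succ id)ᴴ * B.submatrix Fin.succ id := by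
  ext j l
  simp [Matrix.mul_apply, Fin.sum_univ_succ, vecMulVec_apply]

section RowEchelon

variable {r k : ℕ}

theorem RowEchelonPosPivots.rank_eq {B : Matrix (Fin r) (Fin k) ℂ} (hB : RowEchelonPosPivots B) :
    B.rank = r := by
  obtain ⟨p, hmono, hpiv⟩ := hB
  have : B.IsPivotedBy fun i => (p i : WithTop (Fin k)) := by
    refine Matrix.isPivotedBy_iff.mpr ⟨fun a b h => WithTop.coe_le_coe.mpr (hmono.monotone h),
      fun a _ b _ h => WithTop.coe_lt_coe.mpr (hmono h), fun i => ⟨fun j hj => ?_, fun c hc => ?_⟩⟩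
    · exact (hpiv i).2 j (Fin.lt_def.mp (WithTop.coe_lt_coe.mp hj))
    · rw [← WithTop.coe_inj.mp hc]
      exact fun h0 => (hpiv i).1.1.ne' (by simp [h0])
  simp [this.rank_eq]

theorem RowEchelonPosPivots.isUnit_mul_conjTranspose {B : Matrix (Fin r) (Fin k) ℂ}
    (hB : RowEchelonPosPivots B) : IsUnit (B * Bᴴ) :=
  Matrix.isUnit_of_rank_eq_card (by rw [Matrix.rank_self_mul_conjTranspose, hB.rank_eq,
    Fintype.card_fin])

theorem RowEchelonPosPivots.tail {B : Matrix (Fin (r + 1)) (Fin k) ℂ}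
    (hB : RowEchelonPosPivots B) : RowEchelonPosPivots (B.submatrix Fin.succ id) := by
  obtain ⟨p, hmono, hpiv⟩ := hB
  exact ⟨p ∘ Fin.succ, hmono.comp (Fin.strictMono_succ), fun i => hpiv i.succ⟩

theorem RowEchelonPosPivots.exists_pivot_gram {B : Matrix (Fin (r + 1)) (Fin k) ℂ}
    (hB : RowEchelonPosPivots B) :
    ∃ c, 0 < B 0 c ∧ (∀ j < c, (Bᴴ * B) j j = 0) ∧ ∀ l, (Bᴴ * B) c l = star (B 0 c) * B 0 l := by
  obtain ⟨p, hmono, hpiv⟩ := hB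
  have hleft : ∀ i, ∀ j < p 0, B i j = 0 := fun i j hj =>
    (hpiv i).2 j (hj.trans_le (hmono.monotone (Fin.zero_le i)))
  have hbelow : ∀ i ≠ 0, B i (p 0) = 0 := fun i hi => (hpiv i).2 _ (hmono (Fin.pos_of_ne_zero hi))
  refine ⟨p 0, Complex.pos_iff.mpr ⟨(hpiv 0).1.1, (hpiv 0).1.2.symm⟩, fun j hj => ?_, fun l => ?_⟩
  · simp [Matrix.mul_apply, hleft _ _ hj]
  · rw [Matrix.mul_apply, Fintype.sum_eq_single 0 fun i hi => by simp [hbelow i hi]]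
    rfl

theorem RowEchelonPosPivots.row_zero_eq_of_gram_eq {B B' : Matrix (Fin (r + 1)) (Fin k) ℂ}
    (hB : RowEchelonPosPivots B) (hB' : RowEchelonPosPivots B') (h : Bᴴ * B = B'ᴴ * B') :
    B 0 = B' 0 := by
  obtain ⟨c, hc, hcz, hcg⟩ := hB.exists_pivot_gram
  obtain ⟨c', hc', hcz', hcg'⟩ := hB'.exists_pivot_gram
  have hne : ∀ {a : ℂ}, 0 < a → star a * a ≠ 0 := fun ha =>
    mul_ne_zero (star_ne_zero.mpr ha.ne') ha.ne'
  obtain rfl : c = c' := by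
    refine le_antisymm (not_lt.mp fun hlt => hne hc' ?_) (not_lt.mp fun hlt => hne hc ?_)
    · rw [← hcg', ← h, hcz c' hlt]
    · rw [← hcg, h, hcz' c hlt]
  have h0 : B 0 c = B' 0 c :=
    Complex.eq_of_pos_of_star_mul_self_eq hc hc' (by rw [← hcg, ← hcg', h])
  funext l
  have hl := hcg l
  rw [h, hcg' l, h0] at hl
  exact (mul_left_cancel₀ (star_ne_zero.mpr hc'.ne') hl).symm

theorem RowEchelonPosPivots.eq_of_gram_eq : ∀ {r : ℕ} {B B' : Matrix (Fin r) (Fin k) ℂ},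
    RowEchelonPosPivots B → RowEchelonPosPivots B' → Bᴴ * B = B'ᴴ * B' → B = B'
  | 0, _, _, _, _, _ => by
    ext i
    exact i.elim0
  | r + 1, B, B', hB, hB', h => by
    have h0 := hB.row_zero_eq_of_gram_eq hB' h
    rw [Matrix.conjTranspose_mul_self_eq_vecMulVec_add,
      Matrix.conjTranspose_mul_self_eq_vecMulVec_add, h0] at h
    have htail := eq_of_gram_eq hB.tail hB'.tail (add_left_cancel h)
    ext i j
    refine Fin.cases (congrFun h0 j) (fun i => ?_) i
    exact congrFun (congrFun htail i) j

end RowEchelon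

section Cholesky

variable {N r k : ℕ}

/-- One step of Gram–Schmidt on the first column `a` of `A`: with `g = a / ‖a‖` and
`u = gᴴ A`, the matrix `C = A - g u` has zero first column and `Aᴴ A = uᴴ u + Cᴴ C`. -/
theorem Matrix.exists_conjTranspose_mul_self_eq_vecMulVec_add (A : Matrix (Fin N) (Fin (k + 1)) ℂ)
    (hA : (fun i => A i 0) ≠ 0) :
    ∃ (u : Fin (k + 1) → ℂ) (C : Matrix (Fin N) (Fin (k + 1)) ℂ),
      0 < u 0 ∧ (∀ i, C i 0 = 0) ∧ Aᴴ * A = vecMulVec (star u) u + Cᴴ * C := by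
  set a : Fin N → ℂ := fun i => A i 0
  have hq : 0 < star a ⬝ᵥ a := dotProduct_star_self_pos_iff.mpr hA
  set s : ℂ := ((star a ⬝ᵥ a).re.sqrt : ℂ)
  have hs : 0 < s := Complex.zero_lt_real.mpr (Real.sqrt_pos.mpr (Complex.pos_iff.mp hq).1)
  have hss : s * s = star a ⬝ᵥ a := by
    rw [← Complex.ofReal_mul, Real.mul_self_sqrt (Complex.pos_iff.mp hq).1.le,
      ← Complex.eq_re_of_ofReal_le (r := 0) (by exact_mod_cast hq.le)]
  set g := s⁻¹ • a
  set u := star g ᵥ* A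
  have hstar_g : star g = s⁻¹ • star a := by
    rw [star_smul, star_inv₀, (IsSelfAdjoint.of_nonneg hs.le).star_eq]
  have hu0 : u 0 = s := by
    change star g ⬝ᵥ a = s
    rw [hstar_g, smul_dotProduct, ← hss, smul_eq_mul, inv_mul_cancel_left₀ hs.ne']
  have hgg : star g ⬝ᵥ g = 1 := by
    rw [hstar_g, smul_dotProduct, dotProduct_smul, ← hss, smul_eq_mul, smul_eq_mul,
      inv_mul_cancel_left₀ hs.ne', inv_mul_cancel₀ hs.ne']
  refine ⟨u, A - vecMulVec g u, hu0 ▸ hs, fun i => ?_, ?_⟩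
  · simp only [sub_apply, vecMulVec_apply, hu0, g, a, Pi.smul_apply, smul_eq_mul]
    rw [mul_right_comm, inv_mul_cancel₀ hs.ne', one_mul, sub_self]
  · have hAg : Aᴴ *ᵥ g = star u := by rw [star_vecMul, star_star]
    rw [conjTranspose_sub, conjTranspose_vecMulVec, Matrix.sub_mul, Matrix.mul_sub, Matrix.mul_sub,
      mul_vecMulVec, vecMulVec_mul, vecMulVec_mul_vecMulVec, hAg, hgg, one_smul]
    abel

theorem RowEchelonPosPivots.consZeroCol {B : Matrix (Fin r) (Fin k) ℂ}
    (hB : RowEchelonPosPivots B) :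
    RowEchelonPosPivots (Matrix.of fun i => (Fin.cons 0 (B i) : Fin (k + 1) → ℂ)) := by
  obtain ⟨p, hmono, hpiv⟩ := hB
  refine ⟨Fin.succ ∘ p, Fin.strictMono_succ.comp hmono, fun i => ⟨(hpiv i).1, ?_⟩⟩
  intro j hj
  refine Fin.cases (by simp) (fun j hj => ?_) j hj
  simpa using (hpiv i).2 j (by simpa using hj)

theorem Matrix.conjTranspose_mul_self_eq_of_col_zero {C : Matrix (Fin N) (Fin (k + 1)) ℂ}
    (hC : ∀ i, C i 0 = 0) {B : Matrix (Fin r) (Fin k) ℂ}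
    (h : (C.submatrix id Fin.succ)ᴴ * C.submatrix id Fin.succ = Bᴴ * B) :
    Cᴴ * C = (Matrix.of fun i => (Fin.cons 0 (B i) : Fin (k + 1) → ℂ))ᴴ *
      Matrix.of fun i => (Fin.cons 0 (B i) : Fin (k + 1) → ℂ) := by
  ext j l
  refine Fin.cases (by simp [Matrix.mul_apply, hC]) (fun j => ?_) j
  refine Fin.cases (by simp [Matrix.mul_apply, hC]) (fun l => ?_) l
  simpa [Matrix.mul_apply] using congrFun (congrFun h j) l

theorem RowEchelonPosPivots.vecCons {B : Matrix (Fin r) (Fin (k + 1)) ℂ}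
    (hB : RowEchelonPosPivots B) (hB0 : ∀ i, B i 0 = 0) {u : Fin (k + 1) → ℂ} (hu : 0 < u 0) :
    RowEchelonPosPivots (Matrix.of (Matrix.vecCons u B)) := by
  obtain ⟨p, hmono, hpiv⟩ := hB
  have hp : ∀ i, 0 < p i := fun i =>
    Fin.pos_of_ne_zero fun h => (hpiv i).1.1.ne' (by rw [h, hB0, Complex.zero_re])
  refine ⟨Fin.cons 0 p, Fin.strictMono_cons.mpr ⟨hp, hmono⟩, fun i => ?_⟩
  refine Fin.cases ⟨?_, fun j hj => absurd hj (by simp)⟩ (fun i => hpiv i) i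
  exact (Complex.pos_iff.mp hu).imp_right Eq.symm

theorem Matrix.exists_rowEchelonPosPivots_conjTranspose_mul_self_eq :
    ∀ {k N : ℕ} (A : Matrix (Fin N) (Fin k) ℂ),
      ∃ (r : ℕ) (B : Matrix (Fin r) (Fin k) ℂ), RowEchelonPosPivots B ∧ Aᴴ * A = Bᴴ * B
  | 0, _, _ => ⟨0, 0, ⟨Fin.elim0, fun i => i.elim0, fun i => i.elim0⟩, by ext i; exact i.elim0⟩
  | k + 1, N, A => by
    have hstep : ∀ C : Matrix (Fin N) (Fin (k + 1)) ℂ, (∀ i, C i 0 = 0) →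
        ∃ (r : ℕ) (B : Matrix (Fin r) (Fin (k + 1)) ℂ),
          RowEchelonPosPivots B ∧ (∀ i, B i 0 = 0) ∧ Cᴴ * C = Bᴴ * B := fun C hC => by
      obtain ⟨r, B, hB, h⟩ := exists_rowEchelonPosPivots_conjTranspose_mul_self_eq
        (C.submatrix id Fin.succ)
      exact ⟨r, _, hB.consZeroCol, fun i => rfl, conjTranspose_mul_self_eq_of_col_zero hC h⟩
    by_cases hA : (fun i => A i 0) = 0
    · obtain ⟨r, B, hB, -, h⟩ := hstep A (congrFun hA)
      exact ⟨r, B, hB, h⟩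
    · obtain ⟨u, C, hu, hC, hAC⟩ := exists_conjTranspose_mul_self_eq_vecMulVec_add A hA
      obtain ⟨r, B, hB, hB0, h⟩ := hstep C hC
      refine ⟨r + 1, _, hB.vecCons hB0 hu, ?_⟩
      rw [conjTranspose_mul_self_eq_vecMulVec_add, hAC, h]
      rfl

open scoped MatrixOrder in
theorem Matrix.PosSemidef.exists_rowEchelonPosPivots {S : Matrix (Fin k) (Fin k) ℂ}
    (hS : S.PosSemidef) :
    ∃ (r : ℕ) (B : Matrix (Fin r) (Fin k) ℂ), RowEchelonPosPivots B ∧ S = Bᴴ * B := by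
  obtain ⟨A, rfl⟩ := CStarAlgebra.nonneg_iff_eq_star_mul_self.mp hS.nonneg
  exact exists_rowEchelonPosPivots_conjTranspose_mul_self_eq A

theorem Matrix.PosSemidef.existsUnique_rowEchelonPosPivots {S : Matrix (Fin k) (Fin k) ℂ}
    (hS : S.PosSemidef) (hr : S.rank = r) :
    ∃! B : Matrix (Fin r) (Fin k) ℂ, RowEchelonPosPivots B ∧ S = Bᴴ * B := by
  obtain ⟨r', B, hB, rfl⟩ := hS.exists_rowEchelonPosPivots
  obtain rfl : r' = r := by rw [← hr, rank_conjTranspose_mul_self, hB.rank_eq]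
  exact ⟨B, ⟨hB, rfl⟩, fun B' hB' => hB'.1.eq_of_gram_eq hB hB'.2.symm⟩

end Cholesky

section Normalize

variable {k m a r : ℕ} (x : Fin m → ℝ) (W : Fin m → Matrix (Fin k) (Fin k) ℂ)
  {F : ℝ → Matrix (Fin k) (Fin a) ℂ} {B : Matrix (Fin r) (Fin a) ℂ}

theorem Matrix.mul_conjTranspose_mul_inv_self (hB : IsUnit (B * Bᴴ)) :
    B * (Bᴴ * (B * Bᴴ)⁻¹) = 1 := by
  rw [← Matrix.mul_assoc, mul_nonsing_inv _ ((isUnit_iff_isUnit_det _).mp hB)]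

theorem innerFun_mul_pinv_left (hB : IsUnit (B * Bᴴ)) {G : ℝ → Matrix (Fin k) (Fin a) ℂ}
    (hG : innerFun x W F G = Bᴴ * B) :
    innerFun x W (fun t => F t * (Bᴴ * (B * Bᴴ)⁻¹)) G = B := by
  rw [innerFun_mul_const_left, hG, ← Matrix.mul_assoc, ← conjTranspose_mul,
    Matrix.mul_conjTranspose_mul_inv_self hB, conjTranspose_one, Matrix.one_mul]

theorem innerFun_mul_pinv_self (hB : IsUnit (B * Bᴴ)) (hF : innerFun x W F F = Bᴴ * B) :
    innerFun x W (fun t => F t * (Bᴴ * (B * Bᴴ)⁻¹)) (fun t => F t * (Bᴴ * (B * Bᴴ)⁻¹)) = 1 := by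
  rw [innerFun_mul_const_right, innerFun_mul_pinv_left x W hB hF,
    Matrix.mul_conjTranspose_mul_inv_self hB]

end Normalize

theorem last_orthonormal_polynomial_general
    (k m n ℓ : ℕ) (hk : 1 ≤ k) (hn : 2 ≤ n)
    (x : Fin m → ℝ)
    (W : Fin m → Matrix (Fin k) (Fin k) ℂ)
    (hW : ∀ j, (W j).PosSemidef)
    (hrank : ∀ Pm : Polynomial (Matrix (Fin k) (Fin k) ℂ),
        IsMonicOrth x W (n - 1) Pm → (innerMu x W Pm Pm).rank = k - ℓ)
    (P : ℕ → Polynomial (Matrix (Fin k) (Fin k) ℂ))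
    (hPdeg : ∀ j : ℕ, j + 2 ≤ n → (P j).natDegree = j)
    (hPorth : ∀ i j : ℕ, i + 2 ≤ n → j + 2 ≤ n →
        innerMu x W (P i) (P j) = if i = j then 1 else 0)
    (Pp : Polynomial (Matrix (Fin k) (Fin k) ℂ))
    (hPp : Pp = X * P (n - 2)
        - P (n - 2) * Polynomial.C (innerMu x W (P (n - 2)) (X * P (n - 2)))
        - (if n = 2 then 0
            else P (n - 3) * Polynomial.C ((innerMu x W (P (n - 2)) (X * P (n - 3)))ᴴ))) :
    (∃! B : Matrix (Fin (k - ℓ)) (Fin k) ℂ,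
        RowEchelonPosPivots B ∧ innerFun x W (pev Pp) (pev Pp) = Bᴴ * B) ∧
    (∀ B : Matrix (Fin (k - ℓ)) (Fin k) ℂ,
        RowEchelonPosPivots B → innerFun x W (pev Pp) (pev Pp) = Bᴴ * B →
        (∀ j : ℕ, j + 2 ≤ n →
            innerFun x W (fun t => pev Pp t * (Bᴴ * (B * Bᴴ)⁻¹)) (pev (P j)) = 0) ∧
        innerFun x W (fun t => pev Pp t * (Bᴴ * (B * Bᴴ)⁻¹))
            (fun t => pev Pp t * (Bᴴ * (B * Bᴴ)⁻¹)) = 1 ∧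
        innerFun x W (fun t => pev Pp t * (Bᴴ * (B * Bᴴ)⁻¹))
            (pev (X * P (n - 2))) = B) := by
  obtain ⟨d, rfl⟩ : ∃ d, n = d + 2 := ⟨n - 2, by omega⟩
  simp only [Nat.add_sub_cancel, show d + 2 - 3 = d - 1 by omega, show d + 2 - 1 = d + 1 by omega,
    Nat.add_eq_right, Nat.add_le_add_iff_right] at hPp hrank hPdeg hPorth ⊢
  rw [sub_sub] at hPp
  change Pp = recurrencePoly x W P d at hPp
  subst hPp
  have hherm : ∀ j, (W j).IsHermitian := fun j => (hW j).isHermitian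
  have : Nonempty (Fin k) := ⟨⟨0, hk⟩⟩
  have hrankPp : (innerMu x W (recurrencePoly x W P d) (recurrencePoly x W P d)).rank = k - ℓ := by
    rw [← rank_innerMu_mul_C_self x W (isUnit_nonsing_inv_det _ ((isUnit_iff_isUnit_det _).mp
      (isUnit_leadingCoeff_of_orthonormal hPdeg hPorth)))]
    exact hrank _ (isMonicOrth_recurrencePoly_mul_C_inv hPdeg hPorth hherm)
  refine ⟨(posSemidef_innerMu_self x W hW _).existsUnique_rowEchelonPosPivots hrankPp,
    fun B hB hgram => ⟨fun j hj => ?_, innerFun_mul_pinv_self x W hB.isUnit_mul_conjTranspose hgram,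
      innerFun_mul_pinv_left x W hB.isUnit_mul_conjTranspose ?_⟩⟩
  · rw [innerFun_mul_const_left, innerFun_pev, ← conjTranspose_innerMu x W hherm,
      innerMu_recurrencePoly_eq_zero hPdeg hPorth hherm
        (degree_lt_of_natDegree_lt (by rw [hPdeg j hj]; omega)),
      conjTranspose_zero, Matrix.mul_zero]
  · rw [innerFun_pev, innerMu_recurrencePoly_X_mul hPdeg hPorth hherm]
    exact hgram

/-- Construction of the last orthonormal polynomial `P_{n-1}`:
with `P(x) = x P_{n-2}(x) - P_{n-2}(x) A_{n-2} - P_{n-3}(x) B_{n-3}^*`, (i) there is a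
unique `B_{n-2} ∈ ℂ^{(k-ℓ)×k}` in row echelon form with positive pivots with
`⟨P,P⟩_μ = B_{n-2}^* B_{n-2}`; (ii) `P_{n-1}(x) = P(x) B_{n-2}^* (B_{n-2} B_{n-2}^*)⁻¹`
is orthonormal: `⟨P_{n-1},P_j⟩_μ = 0` for `j < n-1`, `⟨P_{n-1},P_{n-1}⟩_μ = I`, and
`⟨P_{n-1}, x P_{n-2}(x)⟩_μ = B_{n-2}`. -/
theorem last_orthonormal_polynomial
    (k m n ℓ : ℕ) (hk : 1 ≤ k) (hn : 2 ≤ n) (hℓ : ℓ < k)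
    (x : Fin m → ℝ) (hx : Function.Injective x)
    (W : Fin m → Matrix (Fin k) (Fin k) ℂ)
    (hW : ∀ j, (W j).PosSemidef) (hsum : ∑ j, W j = 1)
    (hdef : NDefinite n x W)
    (hrank : ∀ Pm : Polynomial (Matrix (Fin k) (Fin k) ℂ),
        IsMonicOrth x W (n - 1) Pm → (innerMu x W Pm Pm).rank = k - ℓ)
    (P : ℕ → Polynomial (Matrix (Fin k) (Fin k) ℂ))
    (hP0 : P 0 = 1)
    (hPdeg : ∀ j : ℕ, j + 2 ≤ n → (P j).natDegree = j)
    (hPorth : ∀ i j : ℕ, i + 2 ≤ n → j + 2 ≤ n →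
        innerMu x W (P i) (P j) = if i = j then 1 else 0)
    (hPB : ∀ j : ℕ, j + 3 ≤ n → UpperTriPosDiag (innerMu x W (P (j + 1)) (X * P j)))
    (Pp : Polynomial (Matrix (Fin k) (Fin k) ℂ))
    (hPp : Pp = X * P (n - 2)
        - P (n - 2) * Polynomial.C (innerMu x W (P (n - 2)) (X * P (n - 2)))
        - (if n = 2 then 0
            else P (n - 3) * Polynomial.C ((innerMu x W (P (n - 2)) (X * P (n - 3)))ᴴ))) :
    (∃! B : Matrix (Fin (k - ℓ)) (Fin k) ℂ,
        RowEchelonPosPivots B ∧ innerFun x W (pev Pp) (pev Pp) = Bᴴ * B) ∧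
    (∀ B : Matrix (Fin (k - ℓ)) (Fin k) ℂ,
        RowEchelonPosPivots B → innerFun x W (pev Pp) (pev Pp) = Bᴴ * B →
        (∀ j : ℕ, j + 2 ≤ n →
            innerFun x W (fun t => pev Pp t * (Bᴴ * (B * Bᴴ)⁻¹)) (pev (P j)) = 0) ∧
        innerFun x W (fun t => pev Pp t * (Bᴴ * (B * Bᴴ)⁻¹))
            (fun t => pev Pp t * (Bᴴ * (B * Bᴴ)⁻¹)) = 1 ∧
        innerFun x W (fun t => pev Pp t * (Bᴴ * (B * Bᴴ)⁻¹))
            (pev (X * P (n - 2))) = B) :=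
  last_orthonormal_polynomial_general k m n ℓ hk hn x W hW hrank P hPdeg hPorth Pp hPp
end
end

section
/- Let X_0 ∈ ℂ^{N×N} be Hermitian, and let Q, R : ℝ → ℂ^{N×N} be differentiable matrix-valued functions such that for all t ∈ ℝ: Q(t) is unitary, R(t) is upper triangular with positive real diagonal entries, and exp(t X_0) = Q(t) R(t). Then X(t) := Q(t)^* X_0 Q(t) satisfies X(0) = X_0, X(t) = R(t) X_0 R(t)^{−1} for all t, and X is differentiable with ∂_t X(t) = X(t) B(X(t)) − B(X(t)) X(t), where B(Y) := Y_− − (Y_−)^* and Y_− denotes the strictly lower triangular part of Y. -/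
/-!
Write `X = Qᴴ X₀ Q` and `A = Qᴴ Q'`. Since `R = Qᴴ exp(t X₀)` and `X₀` commutes with `exp(t X₀)`,
`R' = (X - A) R`. Unitarity of `Q` makes `A` skew-Hermitian, while `R' R⁻¹` is upper triangular
with real diagonal. A skew-Hermitian `A` for which `X - A` is upper triangular with real diagonal
is determined by the Hermitian `X`: it is `B(X)`. Finally `Q' = Q A` gives
`∂ₜ X = Aᴴ X + X A = X B(X) - B(X) X`. At `t = 0`, `R = Qᴴ` is unitary and upper triangular with
positive diagonal, hence `1`.
-/

open Matrix

noncomputable section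

/-- The strictly lower triangular part `Y_-` of a square matrix. -/
def lowerPart {N : ℕ} (Y : Matrix (Fin N) (Fin N) ℂ) : Matrix (Fin N) (Fin N) ℂ :=
  Matrix.of fun i j => if (j : ℕ) < (i : ℕ) then Y i j else 0

/-- The Toda generator `B(Y) = Y_- - (Y_-)^*`. -/
def todaB {N : ℕ} (Y : Matrix (Fin N) (Fin N) ℂ) : Matrix (Fin N) (Fin N) ℂ :=
  lowerPart Y - (lowerPart Y)ᴴ

open scoped ComplexOrder

namespace Matrix

variable {n : Type*} [Fintype n] [LinearOrder n]

theorem IsUpperTriangular.mul_apply_self {R : Type*} [NonUnitalNonAssocSemiring R]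
    {M N : Matrix n n R} (hM : M.IsUpperTriangular) (hN : N.IsUpperTriangular) (i : n) :
    (M * N) i i = M i i * N i i := by
  rw [mul_apply, Finset.sum_eq_single i]
  · intro k _ hk
    rcases hk.lt_or_gt with h | h
    · rw [hM h, zero_mul]
    · rw [hN h, mul_zero]
  · simp

theorem IsUpperTriangular.im_apply_self_eq_zero_of_mul_eq {M T S : Matrix n n ℂ} (h : M * T = S)
    (hM : M.IsUpperTriangular) (hT : T.IsUpperTriangular) (hpos : ∀ i, 0 < T i i)
    (hS : ∀ i, (S i i).im = 0) (i : n) : (M i i).im = 0 := by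
  obtain ⟨hre, him⟩ := Complex.pos_iff.1 (hpos i)
  have := hS i
  rw [← h, hM.mul_apply_self hT, Complex.mul_im, ← him, mul_zero, zero_add] at this
  exact (mul_eq_zero.1 this).resolve_right hre.ne'

variable [DecidableEq n]

theorem IsUpperTriangular.isUnit_det {T : Matrix n n ℂ} (hT : T.IsUpperTriangular)
    (hpos : ∀ i, 0 < T i i) : IsUnit T.det := by
  rw [det_of_isUpperTriangular hT, isUnit_iff_ne_zero]
  exact Finset.prod_ne_zero_iff.2 fun i _ => (hpos i).ne'

theorem IsUpperTriangular.eq_one_of_conjTranspose_mul_self {G : Matrix n n ℂ}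
    (hG : G.IsUpperTriangular) (hpos : ∀ i, 0 < G i i) (hunit : Gᴴ * G = 1) : G = 1 := by
  let _ := invertibleOfLeftInverse G Gᴴ hunit
  have hGH : Gᴴ.IsUpperTriangular :=
    inv_eq_left_inv hunit ▸ blockTriangular_inv_of_blockTriangular hG
  have hdiag : ∀ i, G i i = 1 := by
    intro i
    have h := congr_fun₂ hunit i i
    rw [hGH.mul_apply_self hG, conjTranspose_apply, (IsSelfAdjoint.of_nonneg (hpos i).le).star_eq,
      one_apply_eq] at h
    refine (mul_self_eq_one_iff.1 h).resolve_right fun h1 => ?_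
    have := hpos i
    rw [h1] at this
    norm_num at this
  ext i j
  rcases lt_trichotomy i j with h | rfl | h
  · rw [one_apply_ne h.ne, ← star_star (G i j), ← conjTranspose_apply, hGH h, star_zero]
  · rw [hdiag, one_apply_eq]
  · rw [hG h, one_apply_ne h.ne']

theorem IsUpperTriangular.of_mul_eq {M T S : Matrix n n ℂ} (h : M * T = S)
    (hT : T.IsUpperTriangular) (hpos : ∀ i, 0 < T i i) (hS : S.IsUpperTriangular) :
    M.IsUpperTriangular := by
  let _ := invertibleOfIsUnitDet T (hT.isUnit_det hpos)
  rw [← (mul_inv_eq_iff_eq_mul_of_invertible T S M).2 h.symm]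
  exact hS.mul (blockTriangular_inv_of_blockTriangular hT)

end Matrix

theorem eq_todaB_of_sub_isUpperTriangular {N : ℕ} {X A : Matrix (Fin N) (Fin N) ℂ}
    (hX : X.IsHermitian) (hA : A ∈ skewAdjoint (Matrix (Fin N) (Fin N) ℂ))
    (hup : (X - A).IsUpperTriangular) (hdiag : ∀ i, ((X - A) i i).im = 0) : A = todaB X := by
  rw [skewAdjoint.mem_iff, star_eq_conjTranspose] at hA
  have hlow : ∀ {i j}, j < i → A i j = X i j := fun h => (sub_eq_zero.1 (hup h)).symm
  ext i j
  rcases lt_trichotomy i j with h | rfl | h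
  · have hAij : A i j = -star (X j i) := by
      rw [← hlow h, ← conjTranspose_apply, hA, Matrix.neg_apply, neg_neg]
    simp [todaB, lowerPart, hAij, h, h.not_gt]
  · have hre : (A i i).re = 0 := by
      have hskew := congr_arg Complex.re (congr_fun₂ hA i i)
      simp only [conjTranspose_apply, Complex.star_def, Complex.conj_re, Matrix.neg_apply,
        Complex.neg_re] at hskew
      linarith
    have him : (A i i).im = 0 := by
      have hXi : (X i i).im = 0 := Complex.conj_eq_iff_im.1 (congr_fun₂ hX i i)
      simpa [hXi] using hdiag i
    simp [todaB, lowerPart, Complex.ext_iff, hre, him]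
  · simp [todaB, lowerPart, hlow h, h, h.not_gt]

section MatrixCalculus

variable {m n 𝕜 E : Type*} [Fintype m] [Fintype n] [NontriviallyNormedField 𝕜]
  [NormedAddCommGroup E] [NormedSpace 𝕜 E]

theorem hasDerivAt_matrix_iff {M : 𝕜 → Matrix m n E} {M' : Matrix m n E} {t : 𝕜} :
    HasDerivAt M M' t ↔ ∀ i j, HasDerivAt (fun s => M s i j) (M' i j) t := by
  let _ : NormedAddCommGroup (Matrix m n E) := Matrix.normedAddCommGroup
  let _ : NormedSpace 𝕜 (Matrix m n E) := Matrix.normedSpace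
  exact hasDerivAt_pi.trans (forall_congr' fun i => hasDerivAt_pi (φ := fun s => M s i))

theorem hasDerivAt_matrix_const (C : Matrix m n E) (t : 𝕜) : HasDerivAt (fun _ : 𝕜 => C) 0 t :=
  hasDerivAt_matrix_iff.2 fun i j => hasDerivAt_const t (C i j)

theorem HasDerivAt.matrix_unique {M : 𝕜 → Matrix m n E} {M₁ M₂ : Matrix m n E} {t : 𝕜}
    (h₁ : HasDerivAt M M₁ t) (h₂ : HasDerivAt M M₂ t) : M₁ = M₂ :=
  ext fun i j => (hasDerivAt_matrix_iff.1 h₁ i j).unique (hasDerivAt_matrix_iff.1 h₂ i j)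

theorem HasDerivAt.isUpperTriangular [LinearOrder n] {R : 𝕜 → Matrix n n E} {R' : Matrix n n E}
    {t : 𝕜} (hR : HasDerivAt R R' t) (hup : ∀ s, (R s).IsUpperTriangular) :
    R'.IsUpperTriangular := by
  intro i j hij
  have hentry := hasDerivAt_matrix_iff.1 hR i j
  rw [show (fun s => R s i j) = fun _ => 0 from funext fun s => hup s hij] at hentry
  exact hentry.unique (hasDerivAt_const t 0)

theorem HasDerivAt.matrix_mul [DecidableEq n] {𝔸 : Type*} [NormedRing 𝔸] [NormedAlgebra 𝕜 𝔸]
    {M P : 𝕜 → Matrix n n 𝔸} {M' P' : Matrix n n 𝔸} {t : 𝕜}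
    (hM : HasDerivAt M M' t) (hP : HasDerivAt P P' t) :
    HasDerivAt (fun s => M s * P s) (M' * P t + M t * P') t := by
  let _ : NormedRing (Matrix n n 𝔸) := Matrix.linftyOpNormedRing
  let _ : NormedAlgebra 𝕜 (Matrix n n 𝔸) := Matrix.linftyOpNormedAlgebra
  exact hM.mul hP

theorem HasDerivAt.matrix_conjTranspose {M : ℝ → Matrix m n ℂ} {M' : Matrix m n ℂ} {t : ℝ}
    (hM : HasDerivAt M M' t) : HasDerivAt (fun s => (M s)ᴴ) M'ᴴ t :=
  hasDerivAt_matrix_iff.2 fun i j => (hasDerivAt_matrix_iff.1 hM j i).star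

theorem HasDerivAt.im_apply_self_eq_zero {R : ℝ → Matrix n n ℂ} {R' : Matrix n n ℂ} {t : ℝ}
    (hR : HasDerivAt R R' t) (hdiag : ∀ s i, (R s i i).im = 0) (i : n) : (R' i i).im = 0 := by
  have him := Complex.imCLM.hasFDerivAt.comp_hasDerivAt t (hasDerivAt_matrix_iff.1 hR i i)
  rw [show ⇑Complex.imCLM ∘ (fun s => R s i i) = fun _ => 0 from funext fun s => hdiag s i] at him
  exact him.unique (hasDerivAt_const t 0)

theorem hasDerivAt_exp_ofReal_smul [DecidableEq n] (X : Matrix n n ℂ) (t : ℝ) :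
    HasDerivAt (fun s : ℝ => NormedSpace.exp ((s : ℂ) • X))
      (X * NormedSpace.exp ((t : ℂ) • X)) t := by
  let _ : NormedRing (Matrix n n ℂ) := Matrix.linftyOpNormedRing
  let _ : NormedAlgebra ℝ (Matrix n n ℂ) := Matrix.linftyOpNormedAlgebra
  simp only [Complex.coe_smul]
  exact hasDerivAt_exp_smul_const' X t

end MatrixCalculus

section UnitaryPath

variable {n : Type*} [Fintype n] [DecidableEq n]

theorem eq_one_of_unitary_mul_upper_eq_one [LinearOrder n] {Q R : Matrix n n ℂ}
    (hQ : Q ∈ unitaryGroup n ℂ) (hR : R.IsUpperTriangular) (hpos : ∀ i, 0 < R i i)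
    (h : Q * R = 1) : Q = 1 := by
  have hQQ : Qᴴ * Q = 1 := mem_unitaryGroup_iff'.1 hQ
  have hRQ : R = Qᴴ := by rw [← one_mul R, ← hQQ, mul_assoc, h, mul_one]
  have hR1 : R = 1 := hR.eq_one_of_conjTranspose_mul_self hpos <| by
    rw [hRQ, conjTranspose_conjTranspose]
    exact mem_unitaryGroup_iff.1 hQ
  rw [← conjTranspose_conjTranspose Q, ← hRQ, hR1, conjTranspose_one]

theorem conjTranspose_mul_mul_eq_of_commute {Q R X0 : Matrix n n ℂ} (hQ : Q ∈ unitaryGroup n ℂ)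
    (hR : IsUnit R.det) (hcomm : Commute X0 (Q * R)) : Qᴴ * X0 * Q = R * X0 * R⁻¹ := by
  have hQQ : Qᴴ * Q = 1 := mem_unitaryGroup_iff'.1 hQ
  calc Qᴴ * X0 * Q = Qᴴ * X0 * Q * R * R⁻¹ := (mul_nonsing_inv_cancel_right _ _ hR).symm
    _ = Qᴴ * (X0 * (Q * R)) * R⁻¹ := by simp only [mul_assoc]
    _ = Qᴴ * Q * R * X0 * R⁻¹ := by rw [hcomm.eq]; simp only [mul_assoc]
    _ = R * X0 * R⁻¹ := by rw [hQQ, one_mul]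

variable {Q : ℝ → Matrix n n ℂ} {Q' : Matrix n n ℂ} {t : ℝ}

theorem HasDerivAt.conjTranspose_mul_mem_skewAdjoint (hQ : ∀ s, Q s ∈ unitaryGroup n ℂ)
    (hQ' : HasDerivAt Q Q' t) : (Q t)ᴴ * Q' ∈ skewAdjoint (Matrix n n ℂ) := by
  have hconst := hQ'.matrix_conjTranspose.matrix_mul hQ'
  rw [show (fun s => (Q s)ᴴ * Q s) = fun _ => 1 from
    funext fun s => mem_unitaryGroup_iff'.1 (hQ s)] at hconst
  rw [skewAdjoint.mem_iff, star_eq_conjTranspose, conjTranspose_mul, conjTranspose_conjTranspose]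
  exact eq_neg_of_add_eq_zero_left (hconst.matrix_unique (hasDerivAt_matrix_const 1 t))

theorem HasDerivAt.conjTranspose_mul_mul_of_unitary (hQ : ∀ s, Q s ∈ unitaryGroup n ℂ)
    (hQ' : HasDerivAt Q Q' t) (X0 : Matrix n n ℂ) :
    HasDerivAt (fun s => (Q s)ᴴ * X0 * Q s)
      ((Q t)ᴴ * X0 * Q t * ((Q t)ᴴ * Q') - (Q t)ᴴ * Q' * ((Q t)ᴴ * X0 * Q t)) t := by
  have hA := skewAdjoint.mem_iff.1 (hQ'.conjTranspose_mul_mem_skewAdjoint hQ)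
  set A := (Q t)ᴴ * Q'
  have hQ'A : Q' = Q t * A := by
    rw [← mul_assoc, show Q t * (Q t)ᴴ = 1 from mem_unitaryGroup_iff.1 (hQ t), one_mul]
  convert (hQ'.matrix_conjTranspose.matrix_mul (hasDerivAt_matrix_const X0 t)).matrix_mul hQ'
    using 1
  rw [hQ'A, conjTranspose_mul, ← star_eq_conjTranspose A, hA]
  noncomm_ring

theorem hasDerivAt_of_exp_eq_unitary_mul {X0 : Matrix n n ℂ} {R : ℝ → Matrix n n ℂ}
    (hQ : ∀ s, Q s ∈ unitaryGroup n ℂ) (hQ' : HasDerivAt Q Q' t)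
    (hQR : ∀ s : ℝ, NormedSpace.exp ((s : ℂ) • X0) = Q s * R s) :
    HasDerivAt R (((Q t)ᴴ * X0 * Q t - (Q t)ᴴ * Q') * R t) t := by
  have hR : (fun s => (Q s)ᴴ * NormedSpace.exp ((s : ℂ) • X0)) = R := funext fun s => by
    rw [hQR, ← mul_assoc, show (Q s)ᴴ * Q s = 1 from mem_unitaryGroup_iff'.1 (hQ s), one_mul]
  have hA := skewAdjoint.mem_iff.1 (hQ'.conjTranspose_mul_mem_skewAdjoint hQ)
  rw [star_eq_conjTranspose, conjTranspose_mul, conjTranspose_conjTranspose] at hA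
  have hRd := hQ'.matrix_conjTranspose.matrix_mul (hasDerivAt_exp_ofReal_smul X0 t)
  rw [hR, hQR t, ← mul_assoc Q'ᴴ, hA] at hRd
  convert hRd using 1
  noncomm_ring

end UnitaryPath

theorem toda_flow_solution_general
    (N : ℕ) (X0 : Matrix (Fin N) (Fin N) ℂ) (hX0 : X0.IsHermitian)
    (Q R : ℝ → Matrix (Fin N) (Fin N) ℂ)
    (hQdiff : ∀ (i j : Fin N) (t : ℝ), DifferentiableAt ℝ (fun s => Q s i j) t)
    (hQunit : ∀ t : ℝ, Q t ∈ Matrix.unitaryGroup (Fin N) ℂ)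
    (hRtri : ∀ (t : ℝ) (i j : Fin N),
        ((j : ℕ) < (i : ℕ) → R t i j = 0) ∧
        (i = j → 0 < (R t i j).re ∧ (R t i j).im = 0))
    (hQR : ∀ t : ℝ, NormedSpace.exp ((t : ℂ) • X0) = Q t * R t) :
    (Q 0)ᴴ * X0 * Q 0 = X0 ∧
    (∀ t : ℝ, (Q t)ᴴ * X0 * Q t = R t * X0 * (R t)⁻¹) ∧
    (∀ (t : ℝ) (i j : Fin N),
        HasDerivAt (fun s => ((Q s)ᴴ * X0 * Q s) i j)
          ((((Q t)ᴴ * X0 * Q t) * todaB ((Q t)ᴴ * X0 * Q t) -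
              todaB ((Q t)ᴴ * X0 * Q t) * ((Q t)ᴴ * X0 * Q t)) i j) t) := by
  have hRup : ∀ t, (R t).IsUpperTriangular := fun t i j h => (hRtri t i j).1 h
  have hRim : ∀ t i, (R t i i).im = 0 := fun t i => ((hRtri t i i).2 rfl).2
  have hRpos : ∀ t i, 0 < R t i i := fun t i =>
    Complex.pos_iff.2 ⟨((hRtri t i i).2 rfl).1, (hRim t i).symm⟩
  have hQ0 : Q 0 = 1 := eq_one_of_unitary_mul_upper_eq_one (hQunit 0) (hRup 0) (hRpos 0) <| by
    rw [← hQR 0, Complex.ofReal_zero, zero_smul, NormedSpace.exp_zero]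
  refine ⟨by rw [hQ0, conjTranspose_one, one_mul, mul_one], fun t => ?_, fun t i j => ?_⟩
  · refine conjTranspose_mul_mul_eq_of_commute (hQunit t) ((hRup t).isUnit_det (hRpos t)) ?_
    rw [← hQR t]
    exact ((Commute.refl X0).smul_right _).exp_right
  · set Q' : Matrix (Fin N) (Fin N) ℂ := of fun i j => deriv (fun s => Q s i j) t
    have hQ' : HasDerivAt Q Q' t := hasDerivAt_matrix_iff.2 fun i j => (hQdiff i j t).hasDerivAt
    have hR' := hasDerivAt_of_exp_eq_unitary_mul hQunit hQ' hQR
    have hup : ((Q t)ᴴ * X0 * Q t - (Q t)ᴴ * Q').IsUpperTriangular :=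
      .of_mul_eq rfl (hRup t) (hRpos t) (hR'.isUpperTriangular hRup)
    have hB : (Q t)ᴴ * Q' = todaB ((Q t)ᴴ * X0 * Q t) :=
      eq_todaB_of_sub_isUpperTriangular (isHermitian_conjTranspose_mul_mul (Q t) hX0)
        (hQ'.conjTranspose_mul_mem_skewAdjoint hQunit) hup
        (hup.im_apply_self_eq_zero_of_mul_eq rfl (hRup t) (hRpos t)
          (hR'.im_apply_self_eq_zero hRim))
    rw [← hB]
    exact hasDerivAt_matrix_iff.1 (hQ'.conjTranspose_mul_mul_of_unitary hQunit X0) i j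

/-- If `exp(t X_0) = Q(t) R(t)` is a differentiable QR decomposition
with `Q(t)` unitary and `R(t)` upper triangular with positive diagonal, then
`X(t) := Q(t)^* X_0 Q(t)` satisfies `X(0) = X_0`, `X(t) = R(t) X_0 R(t)⁻¹`, and solves
the Toda flow `∂_t X = X B(X) - B(X) X`. -/
theorem toda_flow_solution
    (N : ℕ) (X0 : Matrix (Fin N) (Fin N) ℂ) (hX0 : X0.IsHermitian)
    (Q R : ℝ → Matrix (Fin N) (Fin N) ℂ)
    (hQdiff : ∀ (i j : Fin N) (t : ℝ), DifferentiableAt ℝ (fun s => Q s i j) t)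
    (hRdiff : ∀ (i j : Fin N) (t : ℝ), DifferentiableAt ℝ (fun s => R s i j) t)
    (hQunit : ∀ t : ℝ, Q t ∈ Matrix.unitaryGroup (Fin N) ℂ)
    (hRtri : ∀ (t : ℝ) (i j : Fin N),
        ((j : ℕ) < (i : ℕ) → R t i j = 0) ∧
        (i = j → 0 < (R t i j).re ∧ (R t i j).im = 0))
    (hQR : ∀ t : ℝ, NormedSpace.exp ((t : ℂ) • X0) = Q t * R t) :
    (Q 0)ᴴ * X0 * Q 0 = X0 ∧
    (∀ t : ℝ, (Q t)ᴴ * X0 * Q t = R t * X0 * (R t)⁻¹) ∧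
    (∀ (t : ℝ) (i j : Fin N),
        HasDerivAt (fun s => ((Q s)ᴴ * X0 * Q s) i j)
          ((((Q t)ᴴ * X0 * Q t) * todaB ((Q t)ᴴ * X0 * Q t) -
              todaB ((Q t)ᴴ * X0 * Q t) * ((Q t)ᴴ * X0 * Q t)) i j) t) :=
  toda_flow_solution_general N X0 hX0 Q R hQdiff hQunit hRtri hQR

end
end

section
/- Let J ∈ 𝒥_{k,N} and let R ∈ ℂ^{N×N} be an upper triangular matrix with positive real diagonal entries (hence invertible). If the matrix X := R J R^{−1} is Hermitian, then X ∈ 𝒥_{k,N}; in particular, each subdiagonal block B_j(X) has the same pivot structure as B_j(J) for j = 0,…,n−2 (B_0,…,B_{n−3} upper triangular with positive diagonal entries and B_{n−2} in row echelon form with positive pivots). -/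
open Matrix Polynomial

noncomputable section

/-- `Esel k N b` is the block selection matrix `E_{b+1} ∈ ℂ^{N×k}` whose rows
`b*k, …, b*k + (k-1)` form the identity `I_k` (zero-based indexing). -/
def Esel (k N : ℕ) (b : ℕ) : Matrix (Fin N) (Fin k) ℂ :=
  Matrix.of fun i a => if (i : ℕ) = b * k + (a : ℕ) then 1 else 0

/-- The last (possibly smaller) block selection matrix `E_n ∈ ℂ^{N×(k-ℓ)}`. -/
def EselLast (k n ℓ : ℕ) : Matrix (Fin (n * k - ℓ)) (Fin (k - ℓ)) ℂ :=
  Matrix.of fun i a => if (i : ℕ) = (n - 1) * k + (a : ℕ) then 1 else 0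

/-- The class `𝒥_{k,N}` (`N = n*k - ℓ`): Hermitian block tridiagonal matrices with
`k×k` blocks (the last diagonal block of size `(k-ℓ)×(k-ℓ)`), subdiagonal blocks
`B_0,…,B_{n-3}` upper triangular with positive diagonal and `B_{n-2}` in row echelon
form with positive pivots. -/
def IsJkN (k n ℓ : ℕ) (J : Matrix (Fin (n * k - ℓ)) (Fin (n * k - ℓ)) ℂ) : Prop :=
  J.IsHermitian ∧
  (∀ i j : Fin (n * k - ℓ),
      ((i : ℕ) / k + 2 ≤ (j : ℕ) / k ∨ (j : ℕ) / k + 2 ≤ (i : ℕ) / k) → J i j = 0) ∧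
  (∀ b : ℕ, b + 3 ≤ n →
      UpperTriPosDiag ((Esel k (n * k - ℓ) (b + 1))ᴴ * J * Esel k (n * k - ℓ) b)) ∧
  RowEchelonPosPivots ((EselLast k n ℓ)ᴴ * J * Esel k (n * k - ℓ) (n - 2))


lemma posreal_mul {z w : ℂ} (hz : 0 < z.re ∧ z.im = 0) (hw : 0 < w.re ∧ w.im = 0) :
    0 < (z * w).re ∧ (z * w).im = 0 := by
  obtain ⟨hz1, hz2⟩ := hz; obtain ⟨hw1, hw2⟩ := hw
  constructor
  · simp only [Complex.mul_re, hz2, hw2, mul_zero, zero_mul, sub_zero]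
    exact mul_pos hz1 hw1
  · simp [Complex.mul_im, hz2, hw2]

lemma triple_mul_apply {N : ℕ} (A B C : Matrix (Fin N) (Fin N) ℂ) (i j : Fin N) :
    (A * B * C) i j = ∑ c : Fin N, ∑ a : Fin N, A i a * B a c * C c j := by
  simp only [Matrix.mul_apply, Finset.sum_mul]

lemma sel_apply {N m m' : ℕ} (M : Matrix (Fin N) (Fin N) ℂ) (o o' : ℕ)
    (r : Fin m) (c : Fin m') (i j : Fin N) (hi : (i : ℕ) = o + (r : ℕ))
    (hj : (j : ℕ) = o' + (c : ℕ)) :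
    ((Matrix.of fun (x : Fin N) (a : Fin m) => if (x : ℕ) = o + (a : ℕ) then (1:ℂ) else 0)ᴴ * M *
      (Matrix.of fun (x : Fin N) (a : Fin m') => if (x : ℕ) = o' + (a : ℕ) then (1:ℂ) else 0)) r c
      = M i j := by
  rw [Matrix.mul_apply]
  rw [Finset.sum_eq_single j]
  · rw [Matrix.mul_apply, Finset.sum_eq_single i]
    · simp [Matrix.conjTranspose_apply, hi, hj]
    · intro x _ hx
      have hne : (x : ℕ) ≠ o + (r : ℕ) := by
        intro h; exact hx (Fin.ext (by omega))
      simp [Matrix.conjTranspose_apply, hne]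
    · intro h; exact absurd (Finset.mem_univ i) h
  · intro x _ hx
    have hne : (x : ℕ) ≠ o' + (c : ℕ) := by
      intro h; exact hx (Fin.ext (by omega))
    simp [hne]
  · intro h; exact absurd (Finset.mem_univ j) h

lemma blockEchelon {N k : ℕ} (hk : 0 < k)
    (Rm J Ri : Matrix (Fin N) (Fin N) ℂ)
    (hR0 : ∀ i j : Fin N, (j : ℕ) < (i : ℕ) → Rm i j = 0)
    (hRd : ∀ i : Fin N, 0 < (Rm i i).re ∧ (Rm i i).im = 0)
    (hRi0 : ∀ i j : Fin N, (j : ℕ) < (i : ℕ) → Ri i j = 0)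
    (hRid : ∀ i : Fin N, 0 < (Ri i i).re ∧ (Ri i i).im = 0)
    (hband : ∀ a c : Fin N, (c : ℕ) / k + 2 ≤ (a : ℕ) / k → J a c = 0)
    {r b : ℕ}
    (hrowlt : ∀ a : Fin N, (a : ℕ) / k = b + 1 → (a : ℕ) < (b + 1) * k + r)
    (ρ : Fin r → Fin N) (hρ : ∀ i, (ρ i : ℕ) = (b + 1) * k + (i : ℕ))
    (γ : Fin k → Fin N) (hγ : ∀ j, (γ j : ℕ) = b * k + (j : ℕ))
    (p : Fin r → Fin k) (hp : StrictMono p)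
    (hpiv : ∀ i : Fin r, 0 < (J (ρ i) (γ (p i))).re ∧ (J (ρ i) (γ (p i))).im = 0)
    (hz : ∀ (i : Fin r) (j : Fin k), (j : ℕ) < (p i : ℕ) → J (ρ i) (γ j) = 0) :
    (∀ i : Fin r, 0 < ((Rm * J * Ri) (ρ i) (γ (p i))).re ∧
        ((Rm * J * Ri) (ρ i) (γ (p i))).im = 0) ∧
    (∀ (i : Fin r) (j : Fin k), (j : ℕ) < (p i : ℕ) → (Rm * J * Ri) (ρ i) (γ j) = 0) := by
  have hmul1 : (b + 1) * k = b * k + k := by ring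
  have key : ∀ (i : Fin r) (j : Fin k), (j : ℕ) ≤ (p i : ℕ) → ∀ a c : Fin N,
      (a ≠ ρ i ∨ c ≠ γ j ∨ (j : ℕ) < (p i : ℕ)) →
      Rm (ρ i) a * J a c * Ri c (γ j) = 0 := by
    intro i j hj a c hcase
    by_cases h1 : (a : ℕ) < (ρ i : ℕ)
    · rw [hR0 _ _ h1]; ring
    by_cases h2 : (γ j : ℕ) < (c : ℕ)
    · rw [hRi0 _ _ h2]; ring
    push_neg at h1 h2
    rw [hρ] at h1
    rw [hγ] at h2
    have hilt := i.isLt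
    have hjlt := j.isLt
    have hak : b + 1 ≤ (a : ℕ) / k :=
      (Nat.le_div_iff_mul_le hk).2 (by omega)
    have hck : (c : ℕ) / k ≤ b := by
      have hlt : (c : ℕ) / k < b + 1 := (Nat.div_lt_iff_lt_mul hk).2 (by omega)
      omega
    rcases Nat.lt_or_ge ((a : ℕ) / k) (b + 2) with hak2 | hak2
    · rcases Nat.lt_or_ge ((c : ℕ) / k) b with hck2 | hck2
      · rw [hband a c (by omega)]; ring
      · have hak' : (a : ℕ) / k = b + 1 := by omega
        have hck' : (c : ℕ) / k = b := by omega
        have halow : (b + 1) * k ≤ (a : ℕ) := (Nat.le_div_iff_mul_le hk).1 hak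
        have hahigh : (a : ℕ) < (b + 1) * k + r := hrowlt a hak'
        have hclow : b * k ≤ (c : ℕ) := (Nat.le_div_iff_mul_le hk).1 (le_of_eq hck'.symm)
        set a' : Fin r := ⟨(a : ℕ) - (b + 1) * k, by omega⟩ with ha'
        set c' : Fin k := ⟨(c : ℕ) - b * k, by omega⟩ with hc'
        have hA : a = ρ a' := Fin.ext (by rw [hρ]; simp [ha']; omega)
        have hC : c = γ c' := Fin.ext (by rw [hγ]; simp [hc']; omega)
        have hia : i ≤ a' := by
          rw [Fin.le_def]; simp [ha']; omega
        have hpa : (p i : ℕ) ≤ (p a' : ℕ) := (hp.le_iff_le).2 hia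
        have hcj : (c' : ℕ) ≤ (j : ℕ) := by simp [hc']; omega
        rcases Nat.lt_or_ge ((c' : ℕ)) ((p a' : ℕ)) with hlt | hge
        · rw [hA, hC, hz a' c' hlt]; ring
        · exfalso
          have h1' : (p a' : ℕ) = (p i : ℕ) := by omega
          have h2' : a' = i := hp.injective (Fin.ext h1')
          have h3' : (c' : ℕ) = (j : ℕ) := by omega
          rcases hcase with h | h | h
          · exact h (by rw [hA, h2'])
          · exact h (by rw [hC]; exact congrArg γ (Fin.ext h3'))
          · omega
    · rw [hband a c (by omega)]; ring
  constructor
  · intro i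
    have heq : (Rm * J * Ri) (ρ i) (γ (p i)) =
        Rm (ρ i) (ρ i) * J (ρ i) (γ (p i)) * Ri (γ (p i)) (γ (p i)) := by
      rw [triple_mul_apply]
      rw [Finset.sum_eq_single (γ (p i))]
      · rw [Finset.sum_eq_single (ρ i)]
        · intro a _ ha; exact key i (p i) le_rfl a _ (Or.inl ha)
        · intro h; exact absurd (Finset.mem_univ _) h
      · intro c _ hc
        exact Finset.sum_eq_zero fun a _ => key i (p i) le_rfl a c (Or.inr (Or.inl hc))
      · intro h; exact absurd (Finset.mem_univ _) h
    rw [heq]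
    exact posreal_mul (posreal_mul (hRd _) (hpiv i)) (hRid _)
  · intro i j hj
    rw [triple_mul_apply]
    refine Finset.sum_eq_zero fun c _ => Finset.sum_eq_zero fun a _ =>
      key i j (le_of_lt hj) a c (Or.inr (Or.inr hj))



/-- If `J ∈ 𝒥_{k,N}`, `R` is upper triangular with positive diagonal,
and `X = R J R⁻¹` is Hermitian, then `X ∈ 𝒥_{k,N}`; in particular the last subdiagonal
block of `X` has the same pivot structure as that of `J`. -/
theorem triangular_conjugation_preserves_class
    (k n ℓ : ℕ) (hk : 1 ≤ k) (hn : 2 ≤ n) (hℓ : ℓ < k)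
    (J : Matrix (Fin (n * k - ℓ)) (Fin (n * k - ℓ)) ℂ) (hJ : IsJkN k n ℓ J)
    (R : Matrix (Fin (n * k - ℓ)) (Fin (n * k - ℓ)) ℂ)
    (hRtri : ∀ i j : Fin (n * k - ℓ),
        ((j : ℕ) < (i : ℕ) → R i j = 0) ∧
        (i = j → 0 < (R i j).re ∧ (R i j).im = 0))
    (hX : (R * J * R⁻¹).IsHermitian) :
    IsJkN k n ℓ (R * J * R⁻¹) ∧
    (∀ p : Fin (k - ℓ) → Fin k, StrictMono p →
      (∀ i : Fin (k - ℓ),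
          (0 < (((EselLast k n ℓ)ᴴ * J * Esel k (n * k - ℓ) (n - 2)) i (p i)).re ∧
            (((EselLast k n ℓ)ᴴ * J * Esel k (n * k - ℓ) (n - 2)) i (p i)).im = 0) ∧
          ∀ j : Fin k, (j : ℕ) < (p i : ℕ) →
            ((EselLast k n ℓ)ᴴ * J * Esel k (n * k - ℓ) (n - 2)) i j = 0) →
      (∀ i : Fin (k - ℓ),
          (0 < (((EselLast k n ℓ)ᴴ * (R * J * R⁻¹) * Esel k (n * k - ℓ) (n - 2)) i (p i)).re ∧
            (((EselLast k n ℓ)ᴴ * (R * J * R⁻¹) * Esel k (n * k - ℓ) (n - 2)) i (p i)).im = 0) ∧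
          ∀ j : Fin k, (j : ℕ) < (p i : ℕ) →
            ((EselLast k n ℓ)ᴴ * (R * J * R⁻¹) * Esel k (n * k - ℓ) (n - 2)) i j = 0)) := by
  have hk' : 0 < k := hk
  have hnk1 : (n - 1) * k + k = n * k := by
    have h1 : n - 1 + 1 = n := by omega
    calc (n - 1) * k + k = (n - 1 + 1) * k := by ring
    _ = n * k := by rw [h1]
  have hnk2 : (n - 2) * k + k = (n - 1) * k := by
    rcases Nat.exists_eq_add_of_le hn with ⟨m, rfl⟩
    have h1 : 2 + m - 2 = m := by omega
    have h2 : 2 + m - 1 = m + 1 := by omega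
    rw [h1, h2]; ring
  have hR0 : ∀ i j : Fin (n * k - ℓ), (j : ℕ) < (i : ℕ) → R i j = 0 :=
    fun i j h => (hRtri i j).1 h
  have hRd : ∀ i : Fin (n * k - ℓ), 0 < (R i i).re ∧ (R i i).im = 0 :=
    fun i => (hRtri i i).2 rfl
  have hRbt : R.BlockTriangular (id : Fin (n * k - ℓ) → Fin (n * k - ℓ)) := by
    intro i j hij
    exact hR0 i j hij
  have hdet : R.det ≠ 0 := by
    rw [Matrix.det_of_upperTriangular hRbt]
    refine Finset.prod_ne_zero_iff.2 fun i _ => ?_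
    intro h
    have := (hRd i).1
    rw [h] at this; simp at this
  haveI : Invertible R := R.invertibleOfIsUnitDet (isUnit_iff_ne_zero.2 hdet)
  have hRibt : (R⁻¹).BlockTriangular (id : Fin (n * k - ℓ) → Fin (n * k - ℓ)) :=
    Matrix.blockTriangular_inv_of_blockTriangular hRbt
  have hRi0 : ∀ i j : Fin (n * k - ℓ), (j : ℕ) < (i : ℕ) → R⁻¹ i j = 0 := by
    intro i j h
    exact hRibt (show (id j : Fin (n * k - ℓ)) < id i from h)
  have hRid : ∀ i : Fin (n * k - ℓ), 0 < (R⁻¹ i i).re ∧ (R⁻¹ i i).im = 0 := by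
    intro i
    have h1 : (R * R⁻¹) i i = 1 := by
      rw [Matrix.mul_nonsing_inv R (isUnit_iff_ne_zero.2 hdet)]
      simp [Matrix.one_apply]
    rw [Matrix.mul_apply, Finset.sum_eq_single i] at h1
    · obtain ⟨hre, him⟩ := hRd i
      have hzre : R i i = ((R i i).re : ℂ) := Complex.ext rfl (by simp [him])
      have hw : R⁻¹ i i = (R i i)⁻¹ := (inv_eq_of_mul_eq_one_right h1).symm
      rw [hw, hzre, ← Complex.ofReal_inv]
      constructor
      · simpa using inv_pos.2 hre
      · simp
    · intro a _ ha
      rcases Nat.lt_or_ge (a : ℕ) (i : ℕ) with h | h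
      · rw [(hRtri i a).1 h]; ring
      · have h' : (i : ℕ) < (a : ℕ) := lt_of_le_of_ne h fun e => ha (Fin.ext e.symm)
        rw [hRi0 a i h']; ring
    · intro h; exact absurd (Finset.mem_univ i) h
  have hband : ∀ a c : Fin (n * k - ℓ), (c : ℕ) / k + 2 ≤ (a : ℕ) / k → J a c = 0 :=
    fun a c h => hJ.2.1 a c (Or.inr h)
  have hXlow : ∀ i j : Fin (n * k - ℓ), (j : ℕ) / k + 2 ≤ (i : ℕ) / k →
      (R * J * R⁻¹) i j = 0 := by
    intro i j h
    rw [triple_mul_apply]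
    refine Finset.sum_eq_zero fun c _ => Finset.sum_eq_zero fun a _ => ?_
    by_cases h1 : (a : ℕ) < (i : ℕ)
    · rw [hR0 _ _ h1]; ring
    by_cases h2 : (j : ℕ) < (c : ℕ)
    · rw [hRi0 _ _ h2]; ring
    push_neg at h1 h2
    have hai : (i : ℕ) / k ≤ (a : ℕ) / k := Nat.div_le_div_right h1
    have hcj : (c : ℕ) / k ≤ (j : ℕ) / k := Nat.div_le_div_right h2
    rw [hband a c (by omega)]; ring
  have hXband : ∀ i j : Fin (n * k - ℓ),
      ((i : ℕ) / k + 2 ≤ (j : ℕ) / k ∨ (j : ℕ) / k + 2 ≤ (i : ℕ) / k) →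
      (R * J * R⁻¹) i j = 0 := by
    intro i j h
    rcases h with h | h
    · rw [← hX.apply i j, hXlow j i h, star_zero]
    · exact hXlow i j h
  have hmid : ∀ b : ℕ, b + 3 ≤ n →
      UpperTriPosDiag ((Esel k (n * k - ℓ) (b + 1))ᴴ * (R * J * R⁻¹) *
        Esel k (n * k - ℓ) b) := by
    intro b hb
    have hb2 : (b + 2) * k ≤ (n - 1) * k := Nat.mul_le_mul_right k (by omega)
    have hb3 : (b + 1) * k + k = (b + 2) * k := by ring
    have hb4 : b * k + k = (b + 1) * k := by ring
    have hρv : ∀ i : Fin k, (b + 1) * k + (i : ℕ) < n * k - ℓ := by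
      intro i; have := i.isLt; omega
    have hγv : ∀ j : Fin k, b * k + (j : ℕ) < n * k - ℓ := by
      intro j; have := j.isLt; omega
    have hEapp : ∀ (M : Matrix (Fin (n * k - ℓ)) (Fin (n * k - ℓ)) ℂ) (rr cc : Fin k),
        ((Esel k (n * k - ℓ) (b + 1))ᴴ * M * Esel k (n * k - ℓ) b) rr cc =
          M ⟨(b + 1) * k + (rr : ℕ), hρv rr⟩ ⟨b * k + (cc : ℕ), hγv cc⟩ := by
      intro M rr cc
      exact sel_apply M ((b + 1) * k) (b * k) rr cc _ _ rfl rfl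
    have hJblk := hJ.2.2.1 b hb
    have hrowlt : ∀ a : Fin (n * k - ℓ), (a : ℕ) / k = b + 1 →
        (a : ℕ) < (b + 1) * k + k := by
      intro a ha
      have : (a : ℕ) < (b + 2) * k := (Nat.div_lt_iff_lt_mul hk').1 (by omega)
      omega
    have hres := blockEchelon hk' R J R⁻¹ hR0 hRd hRi0 hRid hband hrowlt
      (fun i : Fin k => ⟨(b + 1) * k + (i : ℕ), hρv i⟩) (fun _ => rfl)
      (fun j : Fin k => ⟨b * k + (j : ℕ), hγv j⟩) (fun _ => rfl)
      (fun x => x) strictMono_id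
      (fun i => by
        have h := (hJblk i i).2 rfl
        rwa [hEapp J] at h)
      (fun i j hj => by
        have h := (hJblk i j).1 hj
        rwa [hEapp J] at h)
    intro r c
    constructor
    · intro hlt
      rw [hEapp (R * J * R⁻¹) r c]
      exact hres.2 r c hlt
    · intro heq
      subst heq
      rw [hEapp (R * J * R⁻¹) r r]
      exact hres.1 r
  have hlastρv : ∀ i : Fin (k - ℓ), (n - 1) * k + (i : ℕ) < n * k - ℓ := by
    intro i; have := i.isLt; omega
  have hlastγv : ∀ j : Fin k, (n - 2) * k + (j : ℕ) < n * k - ℓ := by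
    intro j; have := j.isLt; omega
  have hρLv : ∀ i : Fin (k - ℓ),
      (((⟨(n - 1) * k + (i : ℕ), hlastρv i⟩ : Fin (n * k - ℓ)) : ℕ)) =
        (n - 2 + 1) * k + (i : ℕ) := by
    intro i
    have h1 : n - 2 + 1 = n - 1 := by omega
    show (n - 1) * k + (i : ℕ) = (n - 2 + 1) * k + (i : ℕ)
    rw [h1]
  have hELapp : ∀ (M : Matrix (Fin (n * k - ℓ)) (Fin (n * k - ℓ)) ℂ)
      (rr : Fin (k - ℓ)) (cc : Fin k),
      ((EselLast k n ℓ)ᴴ * M * Esel k (n * k - ℓ) (n - 2)) rr cc =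
        M ⟨(n - 1) * k + (rr : ℕ), hlastρv rr⟩ ⟨(n - 2) * k + (cc : ℕ), hlastγv cc⟩ := by
    intro M rr cc
    exact sel_apply M ((n - 1) * k) ((n - 2) * k) rr cc _ _ rfl rfl
  have hrowltL : ∀ a : Fin (n * k - ℓ), (a : ℕ) / k = n - 2 + 1 →
      (a : ℕ) < (n - 2 + 1) * k + (k - ℓ) := by
    intro a _
    have h1 : n - 2 + 1 = n - 1 := by omega
    have h2 : (n - 2 + 1) * k = (n - 1) * k := by rw [h1]
    have := a.isLt
    omega
  have hlastTransfer : ∀ p : Fin (k - ℓ) → Fin k, StrictMono p →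
      (∀ i : Fin (k - ℓ),
          (0 < (((EselLast k n ℓ)ᴴ * J * Esel k (n * k - ℓ) (n - 2)) i (p i)).re ∧
            (((EselLast k n ℓ)ᴴ * J * Esel k (n * k - ℓ) (n - 2)) i (p i)).im = 0) ∧
          ∀ j : Fin k, (j : ℕ) < (p i : ℕ) →
            ((EselLast k n ℓ)ᴴ * J * Esel k (n * k - ℓ) (n - 2)) i j = 0) →
      (∀ i : Fin (k - ℓ),
          (0 < (((EselLast k n ℓ)ᴴ * (R * J * R⁻¹) * Esel k (n * k - ℓ) (n - 2)) i (p i)).re ∧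
            (((EselLast k n ℓ)ᴴ * (R * J * R⁻¹) * Esel k (n * k - ℓ) (n - 2)) i (p i)).im = 0) ∧
          ∀ j : Fin k, (j : ℕ) < (p i : ℕ) →
            ((EselLast k n ℓ)ᴴ * (R * J * R⁻¹) * Esel k (n * k - ℓ) (n - 2)) i j = 0) := by
    intro p hp hJp
    have hres := blockEchelon (b := n - 2) hk' R J R⁻¹ hR0 hRd hRi0 hRid hband hrowltL
      (fun i : Fin (k - ℓ) => ⟨(n - 1) * k + (i : ℕ), hlastρv i⟩) hρLv
      (fun j : Fin k => ⟨(n - 2) * k + (j : ℕ), hlastγv j⟩) (fun _ => rfl)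
      p hp
      (fun i => by
        have h := (hJp i).1
        rwa [hELapp J] at h)
      (fun i j hj => by
        have h := (hJp i).2 j hj
        rwa [hELapp J] at h)
    intro i
    constructor
    · rw [hELapp (R * J * R⁻¹)]
      exact hres.1 i
    · intro j hj
      rw [hELapp (R * J * R⁻¹)]
      exact hres.2 i j hj
  obtain ⟨pJ, hpJ, hpJprop⟩ := hJ.2.2.2
  exact ⟨⟨hX, hXband, hmid, ⟨pJ, hpJ, hlastTransfer pJ hpJ hpJprop⟩⟩, hlastTransfer⟩
end
end

section
/- Let X_0 ∈ ℂ^{N×N} be Hermitian, t ∈ ℝ, λ ∈ ℝ, and let P be the orthogonal projection onto ker(X_0 − λ I). Let Q ∈ ℂ^{N×N} be unitary and R ∈ ℂ^{N×N} upper triangular with positive real diagonal entries such that exp(t X_0) = Q R. Let E = I_{N×k} ∈ ℂ^{N×k} (the first k columns of the identity) and set L := (E^* R^{−*} E)^{−1} ∈ ℂ^{k×k}. Then L is lower triangular with positive diagonal entries, L L^* = E^* exp(2t X_0) E, and E^* Q^* P Q E = e^{2λt} · L^{−1} (E^* P E) L^{−*}. (Consequently, under the Toda flow the spectral weight of X(t)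 = Q^* X_0 Q at the eigenvalue λ equals L^{−1} (e^{2λt} W(0)) L^{−*}, where W(0) = E^* P E is the initial weight.) -/
/-!
`M = exp(t X₀)` is Hermitian, so `M = Q R` with `Q` unitary gives `Rᴴ R = M²` and `Q = M R⁻¹`.
Compressing by `E` (taking the leading `k × k` block) is multiplicative on a product whose left
factor is lower triangular or whose right factor is upper triangular. Hence `L = Eᴴ Rᴴ E`,
`L⁻¹ = Eᴴ R⁻ᴴ E` and `L Lᴴ = Eᴴ Rᴴ R E = Eᴴ exp(2t X₀) E`. Finally `M P = e^{λt} P = P M`, so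
`Qᴴ P Q = R⁻ᴴ M P M R⁻¹ = e^{2λt} R⁻ᴴ P R⁻¹`, whose compression is `e^{2λt} L⁻¹ (Eᴴ P E) L⁻ᴴ`.
-/

open Matrix

noncomputable section

/-- The first `k` columns of the `N×N` identity, `E = I_{N×k}`. -/
def Ecols (N k : ℕ) : Matrix (Fin N) (Fin k) ℂ :=
  Matrix.of fun i a => if (i : ℕ) = (a : ℕ) then 1 else 0

open scoped Nat

theorem Ecols_eq_one_submatrix {N k : ℕ} (hk : k ≤ N) :
    Ecols N k = (1 : Matrix (Fin N) (Fin N) ℂ).submatrix id (Fin.castLE hk) := by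
  ext i a
  simp [Ecols, one_apply, Fin.ext_iff]

theorem Ecols_conjTranspose_mul_mul {N k : ℕ} (hk : k ≤ N) (A : Matrix (Fin N) (Fin N) ℂ) :
    (Ecols N k)ᴴ * A * Ecols N k = A.submatrix (Fin.castLE hk) (Fin.castLE hk) := by
  ext a b
  simp [Ecols_eq_one_submatrix hk, mul_apply, one_apply]

theorem NormedSpace.exp_mul_eq_smul_of_mul_eq_smul {𝕂 𝔸 : Type*} [RCLike 𝕂] [NormedRing 𝔸]
    [NormedAlgebra 𝕂 𝔸] [CompleteSpace 𝔸] {a p : 𝔸} {c : 𝕂} (h : a * p = c • p) :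
    exp a * p = exp c • p := by
  have hpow (n : ℕ) : a ^ n * p = c ^ n • p := by
    induction n with
    | zero => simp
    | succ n ih => rw [pow_succ', mul_assoc, ih, mul_smul_comm, h, smul_smul, pow_succ]
  have hterm : (fun n => ((n !⁻¹ : 𝕂) • a ^ n) * p) = fun n => ((n !⁻¹ : 𝕂) • c ^ n) • p := by
    funext n
    rw [smul_mul_assoc, hpow, smul_smul, smul_eq_mul]
  have hsum := (exp_series_hasSum_exp' (𝕂 := 𝕂) a).mul_right p
  rw [hterm] at hsum
  exact hsum.unique ((exp_series_hasSum_exp' c).smul_const p)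

namespace Matrix

theorem exp_mul_eq_smul_of_mul_eq_smul {n 𝕂 : Type*} [Fintype n] [DecidableEq n]
    [RCLike 𝕂] {A P : Matrix n n 𝕂} {c : 𝕂} (h : A * P = c • P) :
    NormedSpace.exp A * P = NormedSpace.exp c • P := by
  open scoped Norms.Operator in exact NormedSpace.exp_mul_eq_smul_of_mul_eq_smul h

theorem IsUpperTriangular.conjTranspose {n α : Type*} [LT n] [AddMonoid α] [StarAddMonoid α]
    {A : Matrix n n α} (hA : A.IsUpperTriangular) : Aᴴ.IsLowerTriangular :=
  fun _ _ hij => (congrArg star (hA hij)).trans (star_zero _)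

theorem IsUpperTriangular.inv {n α : Type*} [Fintype n] [DecidableEq n] [LinearOrder n]
    [CommRing α] {A : Matrix n n α} (hA : A.IsUpperTriangular) : A⁻¹.IsUpperTriangular := by
  by_cases hdet : IsUnit A.det
  · have := A.invertibleOfIsUnitDet hdet
    exact blockTriangular_inv_of_blockTriangular hA
  · rw [nonsing_inv_apply_not_isUnit A hdet]
    exact blockTriangular_zero

theorem conjTranspose_mul_self_unitary_mul {n α : Type*} [Fintype n] [DecidableEq n]
    [CommRing α] [StarRing α] {Q : Matrix n n α} (hQ : Q ∈ unitaryGroup n α)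
    (R : Matrix n n α) : (Q * R)ᴴ * (Q * R) = Rᴴ * R := by
  have hQQ : Qᴴ * Q = 1 := mem_unitaryGroup_iff'.1 hQ
  rw [conjTranspose_mul, Matrix.mul_assoc, ← Matrix.mul_assoc Qᴴ, hQQ, Matrix.one_mul]

theorem mul_eq_smul_of_mulVec_eq_smul {n R : Type*} [Fintype n] [CommSemiring R]
    {A P : Matrix n n R} {c : R} (hP : P * P = P) (h : ∀ v, P *ᵥ v = v → A *ᵥ v = c • v) :
    A * P = c • P := by
  refine ext_iff_mulVec.2 fun v => ?_
  rw [← mulVec_mulVec, h _ (by rw [mulVec_mulVec, hP]), smul_mulVec]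

theorem IsHermitian.mul_mul_eq_smul_of_mul_eq_smul {n α : Type*} [Fintype n] [CommRing α]
    [StarRing α] {M P : Matrix n n α} (hM : M.IsHermitian) (hP : P.IsHermitian) {μ : α}
    (hμ : IsSelfAdjoint μ) (hMP : M * P = μ • P) : M * P * M = (μ * μ) • P := by
  have hPM : P * M = μ • P := by
    simpa only [conjTranspose_mul, conjTranspose_smul, hM.eq, hP.eq, hμ.star_eq]
      using congrArg (·ᴴ) hMP
  rw [hMP, smul_mul_assoc, hPM, smul_smul]

section LeadingPrincipalSubmatrix

variable {α : Type*} {N k : ℕ} (hk : k ≤ N)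

theorem submatrix_castLE_mul_of_isUpperTriangular [NonUnitalNonAssocSemiring α]
    (A : Matrix (Fin N) (Fin N) α) {B : Matrix (Fin N) (Fin N) α} (hB : B.IsUpperTriangular) :
    (A * B).submatrix (Fin.castLE hk) (Fin.castLE hk) =
      A.submatrix (Fin.castLE hk) (Fin.castLE hk) *
        B.submatrix (Fin.castLE hk) (Fin.castLE hk) := by
  ext a b
  simp only [submatrix_apply, mul_apply]
  refine (Fintype.sum_of_injective (Fin.castLE hk) (Fin.castLE_injective hk) _ _
    (fun j hj => ?_) fun _ => rfl).symm
  have hkj : k ≤ j := by simpa using hj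
  exact mul_eq_zero_of_right _ (hB (b.isLt.trans_le hkj))

theorem submatrix_castLE_mul_of_isLowerTriangular [NonUnitalNonAssocSemiring α]
    {A : Matrix (Fin N) (Fin N) α} (hA : A.IsLowerTriangular) (B : Matrix (Fin N) (Fin N) α) :
    (A * B).submatrix (Fin.castLE hk) (Fin.castLE hk) =
      A.submatrix (Fin.castLE hk) (Fin.castLE hk) *
        B.submatrix (Fin.castLE hk) (Fin.castLE hk) := by
  ext a b
  simp only [submatrix_apply, mul_apply]
  refine (Fintype.sum_of_injective (Fin.castLE hk) (Fin.castLE_injective hk) _ _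
    (fun j hj => ?_) fun _ => rfl).symm
  have hkj : k ≤ j := by simpa using hj
  exact mul_eq_zero_of_left (hA (a.isLt.trans_le hkj)) _

variable [CommRing α] [StarRing α] {M Q R : Matrix (Fin N) (Fin N) α}

theorem IsUpperTriangular.inv_submatrix_castLE_conjTranspose (hR : R.IsUpperTriangular)
    (hdet : IsUnit R.det) :
    (Rᴴ.submatrix (Fin.castLE hk) (Fin.castLE hk))⁻¹ =
      R⁻¹ᴴ.submatrix (Fin.castLE hk) (Fin.castLE hk) := by
  refine inv_eq_left_inv ?_
  rw [← submatrix_castLE_mul_of_isLowerTriangular hk hR.inv.conjTranspose, ← conjTranspose_mul,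
    mul_nonsing_inv R hdet, conjTranspose_one, submatrix_one _ (Fin.castLE_injective hk)]

theorem IsUpperTriangular.inv_submatrix_castLE_conjTranspose_inv (hR : R.IsUpperTriangular)
    (hdet : IsUnit R.det) :
    (R⁻¹ᴴ.submatrix (Fin.castLE hk) (Fin.castLE hk))⁻¹ =
      Rᴴ.submatrix (Fin.castLE hk) (Fin.castLE hk) := by
  rw [hR.inv.inv_submatrix_castLE_conjTranspose hk (isUnit_nonsing_inv_det R hdet),
    nonsing_inv_nonsing_inv R hdet]

theorem submatrix_castLE_mul_self_of_eq_unitary_mul (hM : M.IsHermitian)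
    (hQ : Q ∈ unitaryGroup (Fin N) α) (hR : R.IsUpperTriangular) (hQR : M = Q * R) :
    Rᴴ.submatrix (Fin.castLE hk) (Fin.castLE hk) *
        (Rᴴ.submatrix (Fin.castLE hk) (Fin.castLE hk))ᴴ =
      (M * M).submatrix (Fin.castLE hk) (Fin.castLE hk) := by
  rw [conjTranspose_submatrix, conjTranspose_conjTranspose,
    ← submatrix_castLE_mul_of_isLowerTriangular hk hR.conjTranspose,
    ← conjTranspose_mul_self_unitary_mul hQ, ← hQR, hM.eq]

theorem submatrix_castLE_conjTranspose_mul_mul_of_eq_mul (hM : M.IsHermitian)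
    (hR : R.IsUpperTriangular) (hdet : IsUnit R.det) (hQR : M = Q * R) {P : Matrix (Fin N) (Fin N) α}
    {c : α} (hMPM : M * P * M = c • P) :
    (Qᴴ * P * Q).submatrix (Fin.castLE hk) (Fin.castLE hk) =
      c • (R⁻¹ᴴ.submatrix (Fin.castLE hk) (Fin.castLE hk) *
        P.submatrix (Fin.castLE hk) (Fin.castLE hk) *
          (R⁻¹ᴴ.submatrix (Fin.castLE hk) (Fin.castLE hk))ᴴ) := by
  have hQ : Q = M * R⁻¹ := by rw [hQR, mul_nonsing_inv_cancel_right R Q hdet]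
  rw [hQ, conjTranspose_mul, hM.eq,
    show R⁻¹ᴴ * M * P * (M * R⁻¹) = R⁻¹ᴴ * (M * P * M) * R⁻¹ by simp only [Matrix.mul_assoc],
    hMPM, mul_smul_comm, smul_mul_assoc, submatrix_smul, Pi.smul_apply, Pi.smul_apply,
    submatrix_castLE_mul_of_isUpperTriangular hk _ hR.inv,
    submatrix_castLE_mul_of_isLowerTriangular hk hR.inv.conjTranspose,
    conjTranspose_submatrix, conjTranspose_conjTranspose]

end LeadingPrincipalSubmatrix

end Matrix

/-- Evolution of the spectral weights under the Toda flow: with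
`exp(t X_0) = Q R` the QR decomposition, `E = I_{N×k}` and `L := (E^* R^{-*} E)⁻¹`,
the matrix `L` is lower triangular with positive diagonal, `L L^* = E^* exp(2t X_0) E`,
and the spectral weight of `X(t) = Q^* X_0 Q` at the eigenvalue `λ` is
`e^{2λt} L⁻¹ (E^* P E) L^{-*}`, where `P` is the orthogonal projection onto
`ker(X_0 - λ)`. -/
theorem toda_spectral_weight_evolution
    (N k : ℕ) (hk : k ≤ N)
    (X0 : Matrix (Fin N) (Fin N) ℂ) (hX0 : X0.IsHermitian)
    (t lam : ℝ)
    (P : Matrix (Fin N) (Fin N) ℂ) (hP : P.IsHermitian) (hPidem : P * P = P)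
    (hPrange : ∀ v : Fin N → ℂ, X0.mulVec v = (lam : ℂ) • v ↔ P.mulVec v = v)
    (Q R : Matrix (Fin N) (Fin N) ℂ)
    (hQ : Q ∈ Matrix.unitaryGroup (Fin N) ℂ)
    (hRtri : ∀ i j : Fin N,
        ((j : ℕ) < (i : ℕ) → R i j = 0) ∧
        (i = j → 0 < (R i j).re ∧ (R i j).im = 0))
    (hQR : NormedSpace.exp ((t : ℂ) • X0) = Q * R)
    (L : Matrix (Fin k) (Fin k) ℂ)
    (hL : L = ((Ecols N k)ᴴ * (R⁻¹)ᴴ * Ecols N k)⁻¹) :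
    (∀ a b : Fin k,
        ((a : ℕ) < (b : ℕ) → L a b = 0) ∧
        (a = b → 0 < (L a b).re ∧ (L a b).im = 0)) ∧
    L * Lᴴ = (Ecols N k)ᴴ * NormedSpace.exp (((2 * t : ℝ) : ℂ) • X0) * Ecols N k ∧
    (Ecols N k)ᴴ * Qᴴ * P * Q * Ecols N k =
      (Real.exp (2 * lam * t) : ℂ) • (L⁻¹ * ((Ecols N k)ᴴ * P * Ecols N k) * (L⁻¹)ᴴ) := by
  set M := NormedSpace.exp ((t : ℂ) • X0)
  set ι := Fin.castLE hk
  have hreal (r : ℝ) : IsSelfAdjoint (r : ℂ) := Complex.conj_ofReal r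
  have hM : M.IsHermitian := (hX0.smul (hreal t)).exp
  have hRup : R.IsUpperTriangular := fun i j hij => (hRtri i j).1 hij
  have hRdet : IsUnit R.det := by
    rw [det_of_isUpperTriangular hRup]
    exact (Finset.prod_ne_zero_iff.2 fun i _ h => by simpa [h] using (hRtri i i).2 rfl).isUnit
  have hLeq : L = Rᴴ.submatrix ι ι := by
    rw [hL, Ecols_conjTranspose_mul_mul hk, hRup.inv_submatrix_castLE_conjTranspose_inv hk hRdet]
  rw [show (Ecols N k)ᴴ * Qᴴ * P * Q * Ecols N k = (Ecols N k)ᴴ * (Qᴴ * P * Q) * Ecols N k by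
    simp only [Matrix.mul_assoc]]
  simp only [Ecols_conjTranspose_mul_mul hk]
  refine ⟨fun a b => ?_, ?_, ?_⟩
  · rw [hLeq, submatrix_apply, conjTranspose_apply]
    refine ⟨fun hab => by rw [show R (ι b) (ι a) = 0 from hRup hab, star_zero], ?_⟩
    rintro rfl
    obtain ⟨hre, him⟩ := (hRtri (ι a) (ι a)).2 rfl
    simpa [hre] using him
  · rw [hLeq, submatrix_castLE_mul_self_of_eq_unitary_mul hk hM hQ hRup hQR,
      ← exp_add_of_commute _ _ (Commute.refl _), ← add_smul]
    push_cast; ring_nf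
  · have hXP : X0 * P = (lam : ℂ) • P :=
      mul_eq_smul_of_mulVec_eq_smul hPidem fun v hv => (hPrange v).2 hv
    have hMP : M * P = (Real.exp (lam * t) : ℂ) • P := by
      rw [exp_mul_eq_smul_of_mul_eq_smul (c := (t : ℂ) * lam)
        (by rw [smul_mul_assoc, hXP, smul_smul]), ← Complex.exp_eq_exp_ℂ]
      push_cast; ring_nf
    rw [submatrix_castLE_conjTranspose_mul_mul_of_eq_mul hk hM hRup hRdet hQR
      (hM.mul_mul_eq_smul_of_mul_eq_smul hP (hreal _) hMP), hLeq,
      hRup.inv_submatrix_castLE_conjTranspose hk hRdet, ← Complex.ofReal_mul, ← Real.exp_add]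
    ring_nf
end
end
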